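/- arXiv:1812.10689 — 8 statements merged into one kernel-verified Lean document; each statement's English description precedes it below -/
import Mathlib

section
/- Let C = C_{b,W} be the missing digit Cantor set for an integer b ≥ 3 and digit set W ⊊ {0,1,…,b−1} with |W| ≥ 2, and let Δ = log|W| / log b. Then for every rational p/q ∈ ℚ \ C (in lowest terms, q ≥ 1), the distance from p/q to C satisfies d(C, p/q) > b^{−(2b)^Δ q^Δ} / (2q). -/
/-- The missing digit Cantor set `C_{b,W}`: reals in `[0,1]` admitting a base-`b`
expansion all of whose digits lie in `W`. -/
def missingDigitSet (b : ℕ) (W : Finset ℕ) : Set ℝ :=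
  {x | ∃ w : ℕ → ℕ, (∀ j, w j ∈ W) ∧ x = ∑' j : ℕ, (w j : ℝ) / (b : ℝ) ^ (j + 1)}

private lemma mds_summable {b : ℕ} (hb : (1:ℝ) < b) (w : ℕ → ℕ) (hw : ∀ j, w j < b) :
    Summable (fun j : ℕ => (w j : ℝ) / (b : ℝ) ^ (j + 1)) := by
  have hb0 : (0:ℝ) < b := lt_trans one_pos hb
  have hinv : |(b:ℝ)⁻¹| < 1 := by
    rw [abs_of_pos (inv_pos.mpr hb0)]
    exact inv_lt_one_of_one_lt₀ hb
  have hg : Summable (fun j : ℕ => (b:ℝ) * ((b:ℝ)⁻¹) ^ (j+1)) :=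
    ((summable_geometric_of_abs_lt_one hinv).mul_left _).comp_injective (add_left_injective 1)
  refine hg.of_nonneg_of_le (fun j => by positivity) (fun j => ?_)
  rw [div_le_iff₀ (by positivity), inv_pow, mul_assoc, inv_mul_cancel₀ (by positivity)]
  rw [mul_one]
  exact le_of_lt (by exact_mod_cast hw j)

private lemma mds_geom {b : ℕ} (hb : (1:ℝ) < b) :
    ∑' j : ℕ, ((b:ℝ)⁻¹) ^ (j + 1) = 1 / ((b:ℝ) - 1) := by
  have hb0 : (0:ℝ) < b := lt_trans one_pos hb
  have hinv : |(b:ℝ)⁻¹| < 1 := by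
    rw [abs_of_pos (inv_pos.mpr hb0)]
    exact inv_lt_one_of_one_lt₀ hb
  have := tsum_geometric_of_abs_lt_one hinv
  calc ∑' j : ℕ, ((b:ℝ)⁻¹) ^ (j + 1) = ∑' j : ℕ, (b:ℝ)⁻¹ * ((b:ℝ)⁻¹) ^ j := by
        simp [pow_succ, mul_comm]
    _ = (b:ℝ)⁻¹ * (1 - (b:ℝ)⁻¹)⁻¹ := by rw [tsum_mul_left, this]
    _ = 1 / ((b:ℝ) - 1) := by
        rw [one_div, ← mul_inv]
        congr 1
        field_simp

private lemma mds_tail_le_one {b : ℕ} (hb : (1:ℝ) < b) (w : ℕ → ℕ) (hw : ∀ j, w j < b) :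
    ∑' j : ℕ, (w j : ℝ) / (b : ℝ) ^ (j + 1) ≤ 1 := by
  have hb0 : (0:ℝ) < b := lt_trans one_pos hb
  have hinv : |(b:ℝ)⁻¹| < 1 := by
    rw [abs_of_pos (inv_pos.mpr hb0)]
    exact inv_lt_one_of_one_lt₀ hb
  have hg : Summable (fun j : ℕ => ((b:ℝ) - 1) * ((b:ℝ)⁻¹) ^ (j+1)) :=
    ((summable_geometric_of_abs_lt_one hinv).mul_left _).comp_injective (add_left_injective 1)
  calc ∑' j : ℕ, (w j : ℝ) / (b : ℝ) ^ (j + 1)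
      ≤ ∑' j : ℕ, ((b:ℝ) - 1) * ((b:ℝ)⁻¹) ^ (j+1) := by
        refine Summable.tsum_le_tsum (fun j => ?_) (mds_summable hb w hw) hg
        rw [div_le_iff₀ (by positivity), inv_pow, mul_assoc, inv_mul_cancel₀ (by positivity),
          mul_one]
        have : (w j : ℝ) + 1 ≤ b := by exact_mod_cast hw j
        linarith
    _ = 1 := by
        rw [tsum_mul_left, mds_geom hb]
        rw [mul_one_div, div_self (by linarith)]

private lemma mds_split {b : ℕ} (hb : (1:ℝ) < b) (w : ℕ → ℕ) (hw : ∀ j, w j < b) (n : ℕ) :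
    ∑' j : ℕ, (w j : ℝ) / (b : ℝ) ^ (j + 1) =
      (∑ j ∈ Finset.range n, (w j : ℝ) / (b : ℝ) ^ (j + 1)) +
        (∑' i : ℕ, (w (n + i) : ℝ) / (b : ℝ) ^ (i + 1)) / (b : ℝ) ^ n := by
  have hb0 : (0:ℝ) < b := lt_trans one_pos hb
  rw [← Summable.sum_add_tsum_nat_add n (mds_summable hb w hw)]
  congr 1
  rw [← tsum_div_const]
  apply tsum_congr
  intro i
  rw [add_comm n i, div_div, ← pow_add]
  ring_nf

private lemma rat_gap (r : ℚ) (N : ℤ) (d : ℕ) (hd : 0 < d) (hne : (r:ℝ) ≠ (N:ℝ)/(d:ℝ)) :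
    1/((r.den:ℝ)*(d:ℝ)) ≤ |(r:ℝ) - (N:ℝ)/(d:ℝ)| := by
  have hden : (0:ℝ) < (r.den : ℝ) := by exact_mod_cast r.pos
  have hd0 : (0:ℝ) < (d : ℝ) := by exact_mod_cast hd
  set A : ℤ := r.num * d - N * r.den with hA
  have key : (r:ℝ) - (N:ℝ)/(d:ℝ) = (A:ℝ)/((r.den:ℝ)*(d:ℝ)) := by
    rw [hA, Rat.cast_def]
    field_simp
    push_cast
    ring
  have hAne : (A:ℝ) ≠ 0 := by
    intro h
    apply hne
    have : (r:ℝ) - (N:ℝ)/(d:ℝ) = 0 := by rw [key, h, zero_div]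
    linarith [this]
  have h1 : (1:ℝ) ≤ |(A:ℝ)| := by
    have : A ≠ 0 := by exact_mod_cast hAne
    have := Int.one_le_abs this
    exact_mod_cast this
  rw [key, abs_div, abs_of_pos (show (0:ℝ) < (r.den:ℝ)*(d:ℝ) by positivity)]
  gcongr

set_option maxHeartbeats 2000000 in
/-- extrinsic distance lower bound for missing digit Cantor sets:
for `p/q ∉ C` in lowest terms, `d(C, p/q) > b^{-(2b)^Δ q^Δ} / (2q)`. -/
theorem stmt_6 (b : ℕ) (hb : 3 ≤ b) (W : Finset ℕ)
    (hWsub : W ⊆ Finset.range b) (hW2 : 2 ≤ W.card) (hWne : W ≠ Finset.range b)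
    (Δ : ℝ) (hΔ : Δ = Real.log W.card / Real.log b)
    (r : ℚ) (hr : (r : ℝ) ∉ missingDigitSet b W) :
    (b : ℝ) ^ (-((2 * b : ℝ) ^ Δ * (r.den : ℝ) ^ Δ)) / (2 * (r.den : ℝ)) <
      Metric.infDist (r : ℝ) (missingDigitSet b W) := by
  classical
  have hbnat : 1 < b := by omega
  have hb1 : (1:ℝ) < b := by exact_mod_cast hbnat
  have hb0 : (0:ℝ) < b := by linarith
  set q := r.den with hqdef
  have hq : 0 < q := r.pos
  have hq1 : (1:ℝ) ≤ (q:ℝ) := by exact_mod_cast hq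
  -- choose m minimal-ish with 2q ≤ b^m
  set m := Nat.log b (2*q - 1) + 1 with hm
  have hm1 : 2*q ≤ b^m := by
    have h := Nat.lt_pow_succ_log_self hbnat (2*q-1)
    simp only [Nat.succ_eq_add_one] at h
    rw [hm]
    omega
  have hm2 : b^m < 2*b*q := by
    have h1 : b ^ Nat.log b (2*q-1) ≤ 2*q-1 := Nat.pow_log_le_self b (by omega)
    calc b^m = b * b^(Nat.log b (2*q-1)) := by rw [hm, pow_succ]; ring
      _ ≤ b*(2*q-1) := Nat.mul_le_mul_left b h1
      _ < b*(2*q) := by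
          have hq2 : 2*q-1 < 2*q := by omega
          exact Nat.mul_lt_mul_of_le_of_lt (le_refl b) hq2 (by omega)
      _ = 2*b*q := by ring
  set K := W.card ^ m with hK
  -- the uniform per-point lower bound
  have key : ∀ x ∈ missingDigitSet b W, 1/(2*(q:ℝ)*(b:ℝ)^K) ≤ dist (r:ℝ) x := by
    rintro x ⟨w, hwW, hx⟩
    have hwb : ∀ j, w j < b := fun j => Finset.mem_range.mp (hWsub (hwW j))
    -- pigeonhole on length-m windows
    obtain ⟨a, a', hane, hfeq⟩ := Fintype.exists_ne_map_eq_of_card_lt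
      (fun a : Fin (K+1) => (fun i : Fin m => (⟨w (a.1 + i.1), hwW _⟩ : {n // n ∈ W})))
      (by
        rw [Fintype.card_fun, Fintype.card_coe, Fintype.card_fin, Fintype.card_fin]
        exact Nat.lt_succ_self K)
    obtain ⟨k, l, hkl, hlK, hwin⟩ :
        ∃ k l : ℕ, k < l ∧ l ≤ K ∧ ∀ i < m, w (k+i) = w (l+i) := by
      rcases lt_or_gt_of_ne hane with h | h
      · exact ⟨a.1, a'.1, h, Nat.lt_succ_iff.mp a'.2, fun i hi => by
          have := congrFun hfeq ⟨i, hi⟩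
          exact congrArg Subtype.val this⟩
      · exact ⟨a'.1, a.1, h, Nat.lt_succ_iff.mp a.2, fun i hi => by
          have := congrFun hfeq.symm ⟨i, hi⟩
          exact congrArg Subtype.val this⟩
    set p := l - k with hp
    have hp0 : 0 < p := by omega
    have hlk : l = k + p := by omega
    -- the periodic digit sequence
    set v : ℕ → ℕ := fun j => if j < k then w j else w (k + (j - k) % p) with hv
    have hvW : ∀ j, v j ∈ W := fun j => by
      rw [hv]; dsimp only; split <;> exact hwW _
    have hvb : ∀ j, v j < b := fun j => Finset.mem_range.mp (hWsub (hvW j))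
    have hvper : ∀ i, v (k + p + i) = v (k + i) := by
      intro i
      rw [hv]; dsimp only
      rw [if_neg (by omega), if_neg (by omega)]
      congr 1
      rw [show k + p + i - k = i + p by omega, show k + i - k = i by omega,
        Nat.add_mod_right]
    have hm0 : 0 < m := by rw [hm]; omega
    have hvagree : ∀ j, j < l + m → v j = w j := by
      intro j
      induction j using Nat.strong_induction_on with
      | _ j ih =>
        intro hj
        by_cases hjk : j < k
        · simp [hv, hjk]
        · by_cases hjl : j < l
          · have hmod : (j - k) % p = j - k := Nat.mod_eq_of_lt (by omega)
            rw [hv]; dsimp only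
            rw [if_neg hjk, hmod, show k + (j - k) = j by omega]
          · -- l ≤ j < l + m
            have h1 : v j = v (j - p) := by
              rw [hv]; dsimp only
              rw [if_neg hjk, if_neg (by omega)]
              congr 1
              rw [show j - k = (j - p - k) + p by omega, Nat.add_mod_right]
            have h2 : v (j - p) = w (j - p) := ih (j-p) (by omega) (by omega)
            have h3 : w (j - p) = w j := by
              have := hwin (j - l) (by omega)
              rw [show k + (j - l) = j - p by omega, show l + (j - l) = j by omega] at this
              exact this
            rw [h1, h2, h3]
    -- the rational point y in C
    set y := ∑' j : ℕ, (v j : ℝ)/(b:ℝ)^(j+1) with hy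
    have hyC : y ∈ missingDigitSet b W := ⟨v, hvW, rfl⟩
    set T : ℕ → ℝ := fun n => ∑' i : ℕ, (v (n+i) : ℝ)/(b:ℝ)^(i+1) with hT
    have hsplit : ∀ n, y = (∑ j ∈ Finset.range n, (v j : ℝ)/(b:ℝ)^(j+1)) + T n / (b:ℝ)^n :=
      fun n => mds_split hb1 v hvb n
    have hTeq : T (k+p) = T k := tsum_congr fun i => by rw [hvper i]
    set A : ℕ := ∑ j ∈ Finset.range (k+p), v j * b^(k+p-1-j) with hA
    set B : ℕ := ∑ j ∈ Finset.range k, v j * b^(k-1-j) with hB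
    have hSgen : ∀ n : ℕ, (b:ℝ)^n * (∑ j ∈ Finset.range n, (v j : ℝ)/(b:ℝ)^(j+1)) =
        ((∑ j ∈ Finset.range n, v j * b^(n-1-j) : ℕ) : ℝ) := by
      intro n
      rw [Finset.mul_sum]
      push_cast
      apply Finset.sum_congr rfl
      intro j hj
      have hj' : j < n := Finset.mem_range.mp hj
      rw [show n-1-j = n-(j+1) from by omega,
        pow_sub₀ (b:ℝ) (by positivity) (by omega : j+1 ≤ n)]
      ring
    set d : ℕ := b^k * (b^p - 1) with hd
    have hd0n : 0 < d := by
      have h1 : 0 < b^p - 1 := by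
        have : 1 < b^p := Nat.one_lt_pow (by omega) hbnat
        omega
      exact Nat.mul_pos (Nat.pow_pos (by omega)) h1
    have hd0 : (0:ℝ) < (d:ℝ) := by exact_mod_cast hd0n
    have hdcast : (d:ℝ) = (b:ℝ)^(k+p) - (b:ℝ)^k := by
      have h1 : 1 ≤ b^p := Nat.one_le_pow _ _ (by omega)
      rw [hd]
      push_cast [h1]
      rw [pow_add]
      ring
    have e1 : (b:ℝ)^(k+p) * y = (A:ℝ) + T (k+p) := by
      rw [hsplit (k+p), mul_add, hSgen (k+p), mul_div_cancel₀ _ (by positivity : ((b:ℝ)^(k+p)) ≠ 0)]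
    have e2 : (b:ℝ)^k * y = (B:ℝ) + T k := by
      rw [hsplit k, mul_add, hSgen k, mul_div_cancel₀ _ (by positivity : ((b:ℝ)^k) ≠ 0)]
    have hyval : y = (((A:ℤ) - (B:ℤ) : ℤ):ℝ) / (d:ℝ) := by
      have e3 : (d:ℝ) * y = (A:ℝ) - (B:ℝ) := by
        rw [hdcast, sub_mul, e1, e2, hTeq]
        ring
      rw [eq_div_iff (ne_of_gt hd0)]
      push_cast
      rw [← e3]
      ring
    -- gap between r and y
    have hry : 1/((q:ℝ)*(d:ℝ)) ≤ |(r:ℝ) - y| := by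
      have hne : (r:ℝ) ≠ (((A:ℤ) - (B:ℤ) : ℤ):ℝ)/(d:ℝ) := by
        rw [← hyval]
        intro h
        exact hr (h ▸ hyC)
      have := rat_gap r ((A:ℤ) - (B:ℤ)) d hd0n hne
      rw [← hyval] at this
      exact this
    -- x close to y
    have hxy : |x - y| ≤ ((b:ℝ)^(l+m))⁻¹ := by
      have hx_split := mds_split hb1 w hwb (l+m)
      have hy_split := hsplit (l+m)
      have hsums : (∑ j ∈ Finset.range (l+m), (v j : ℝ)/(b:ℝ)^(j+1)) =
          (∑ j ∈ Finset.range (l+m), (w j : ℝ)/(b:ℝ)^(j+1)) := by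
        apply Finset.sum_congr rfl
        intro j hj
        rw [hvagree j (Finset.mem_range.mp hj)]
      have hdiff : x - y = ((∑' i : ℕ, (w ((l+m) + i) : ℝ)/(b:ℝ)^(i+1)) - T (l+m)) / (b:ℝ)^(l+m) := by
        rw [hx, hx_split, hy_split, hsums]
        ring
      rw [hdiff, abs_div, abs_of_pos (pow_pos hb0 (l+m))]
      rw [inv_eq_one_div]
      apply div_le_div_of_nonneg_right ?_ (by positivity)
      have h1 := mds_tail_le_one hb1 (fun i => w ((l+m) + i)) (fun i => hwb _)
      have h2 := mds_tail_le_one hb1 (fun i => v ((l+m) + i)) (fun i => hvb _)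
      have h3 : (0:ℝ) ≤ ∑' i : ℕ, (w ((l+m) + i) : ℝ)/(b:ℝ)^(i+1) :=
        tsum_nonneg (fun i => by positivity)
      have h4 : (0:ℝ) ≤ T (l+m) := tsum_nonneg (fun i => by positivity)
      have h2' : T (l+m) ≤ 1 := h2
      rw [abs_le]
      constructor <;> [linarith; linarith]
    -- assemble the chain
    have hdl : (d:ℝ) ≤ (b:ℝ)^l := by
      rw [hdcast, hlk]
      have : (0:ℝ) < (b:ℝ)^k := by positivity
      linarith
    have hbK : (b:ℝ)^l ≤ (b:ℝ)^K := pow_le_pow_right₀ hb1.le hlK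
    have hdK : (d:ℝ) ≤ (b:ℝ)^K := le_trans hdl hbK
    have h2q : (2*(q:ℝ)) ≤ (b:ℝ)^m := by
      have : ((2*q : ℕ):ℝ) ≤ ((b^m : ℕ):ℝ) := by exact_mod_cast hm1
      push_cast at this
      linarith
    have hblm : (d:ℝ) * (2*(q:ℝ)) ≤ (b:ℝ)^(l+m) := by
      rw [pow_add]
      exact mul_le_mul hdl h2q (by positivity) (by positivity)
    have hq0 : (0:ℝ) < (q:ℝ) := by linarith
    have hxy' : |x - y| ≤ 1/((d:ℝ)*(2*(q:ℝ))) := by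
      refine le_trans hxy ?_
      rw [inv_eq_one_div]
      exact one_div_le_one_div_of_le (by positivity) hblm
    have tri : |(r:ℝ) - y| ≤ |(r:ℝ) - x| + |x - y| := abs_sub_le ((r:ℝ)) x y
    have heq1 : 1/((q:ℝ)*(d:ℝ)) - 1/((d:ℝ)*(2*(q:ℝ))) = 1/(2*(q:ℝ)*(d:ℝ)) := by
      field_simp
      ring
    have hfin : 1/(2*(q:ℝ)*(b:ℝ)^K) ≤ 1/(2*(q:ℝ)*(d:ℝ)) := by
      apply one_div_le_one_div_of_le (by positivity)
      have : 2*(q:ℝ)*(d:ℝ) ≤ 2*(q:ℝ)*(b:ℝ)^K := by nlinarith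
      linarith
    rw [Real.dist_eq]
    linarith
  -- nonemptiness of C
  obtain ⟨d0, hd0W⟩ := Finset.card_pos.mp (show 0 < W.card by omega)
  have hCne : (missingDigitSet b W).Nonempty :=
    ⟨_, ⟨fun _ => d0, fun _ => hd0W, rfl⟩⟩
  have hinf : 1/(2*(q:ℝ)*(b:ℝ)^K) ≤ Metric.infDist (r:ℝ) (missingDigitSet b W) := by
    by_contra h
    push_neg at h
    obtain ⟨x, hxC, hdx⟩ := (Metric.infDist_lt_iff hCne).mp h
    exact absurd (key x hxC) (not_le.mpr hdx)
  refine lt_of_lt_of_le ?_ hinf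
  -- final numeric comparison
  have hlogb : 0 < Real.log b := Real.log_pos hb1
  have hW0 : (0:ℝ) < (W.card:ℝ) := by exact_mod_cast (show 0 < W.card by omega)
  have hW1 : (1:ℝ) < (W.card:ℝ) := by exact_mod_cast (show 1 < W.card by omega)
  have hΔpos : 0 < Δ := by
    rw [hΔ]
    exact div_pos (Real.log_pos hW1) hlogb
  have hbΔ : (b:ℝ) ^ Δ = (W.card : ℝ) := by
    rw [Real.rpow_def_of_pos hb0, hΔ, mul_comm, div_mul_cancel₀ _ (ne_of_gt hlogb),
      Real.exp_log hW0]
  have hKcast : (K:ℝ) = ((b:ℝ)^(m:ℕ)) ^ Δ := by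
    rw [hK]
    push_cast
    rw [← hbΔ, ← Real.rpow_natCast ((b:ℝ)^Δ) m, ← Real.rpow_natCast (b:ℝ) m,
      ← Real.rpow_mul hb0.le, ← Real.rpow_mul hb0.le, mul_comm]
  have hbm : ((b:ℝ)^(m:ℕ)) < 2*(b:ℝ)*(q:ℝ) := by
    have : ((b^m : ℕ):ℝ) < ((2*b*q : ℕ):ℝ) := by exact_mod_cast hm2
    push_cast at this
    linarith
  have hKlt : (K:ℝ) < (2*(b:ℝ))^Δ * (q:ℝ)^Δ := by
    rw [hKcast, ← Real.mul_rpow (by positivity) (by positivity : (0:ℝ) ≤ (q:ℝ))]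
    exact Real.rpow_lt_rpow (by positivity) (by rw [mul_assoc] at hbm ⊢; exact hbm) hΔpos
  have hpow : (b:ℝ)^(K:ℕ) < (b:ℝ) ^ ((2*(b:ℝ))^Δ * (q:ℝ)^Δ) := by
    rw [← Real.rpow_natCast (b:ℝ) K]
    exact (Real.rpow_lt_rpow_left_iff hb1).mpr hKlt
  have hq0 : (0:ℝ) < (q:ℝ) := by exact_mod_cast hq
  have hrw : (b:ℝ) ^ (-((2*(b:ℝ))^Δ * (q:ℝ)^Δ)) / (2*(q:ℝ)) =
      1/(2*(q:ℝ)*(b:ℝ)^((2*(b:ℝ))^Δ * (q:ℝ)^Δ)) := by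
    rw [Real.rpow_neg hb0.le]
    have h0 : (0:ℝ) < (b:ℝ)^((2*(b:ℝ))^Δ * (q:ℝ)^Δ) := Real.rpow_pos_of_pos hb0 _
    field_simp
  rw [hrw]
  apply one_div_lt_one_div_of_lt (by positivity)
  have h0K : (0:ℝ) < (b:ℝ)^(K:ℕ) := by positivity
  nlinarith
end

section
/- Let C = C_{b,W} with b ≥ 3, W ⊊ {0,…,b−1}, |W| ≥ 2, Δ = log|W|/log b. Then for every ξ ∈ C and every δ > (2b)^Δ, the inequality |ξ − p/q| ≤ b^{−δ q^Δ} has only finitely many solutions p/q ∈ ℚ \ C. -/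
open Finset Real

section Aux

variable {b : ℕ}

/-- value of a digit sequence -/
noncomputable def mdVal (b : ℕ) (u : ℕ → ℕ) : ℝ := ∑' j : ℕ, (u j : ℝ) / (b : ℝ) ^ (j + 1)

lemma md_summable (hb : 1 < b) (u : ℕ → ℕ) (hu : ∀ j, u j < b) :
    Summable (fun j : ℕ => (u j : ℝ) / (b : ℝ) ^ (j + 1)) := by
  have hb0 : (1:ℝ) < (b:ℝ) := by exact_mod_cast hb
  refine Summable.of_nonneg_of_le (f := fun j : ℕ => ((b:ℝ)⁻¹) ^ j)
    (fun j => by positivity) ?_ ?_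
  · intro j
    have h1 : (u j : ℝ) ≤ (b:ℝ) := by exact_mod_cast (hu j).le
    have h2 : ((b:ℝ)⁻¹) ^ j = (b:ℝ) / (b:ℝ) ^ (j+1) := by
      rw [pow_succ', inv_pow]
      field_simp
    show (u j : ℝ) / (b:ℝ) ^ (j+1) ≤ ((b:ℝ)⁻¹) ^ j
    rw [h2]
    exact div_le_div_of_nonneg_right h1 (by positivity)
  · exact summable_geometric_of_lt_one (by positivity)
      (by rw [inv_lt_one_iff₀]; right; exact hb0)

lemma md_nonneg (u : ℕ → ℕ) : 0 ≤ mdVal b u :=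
  tsum_nonneg (fun j => by positivity)

lemma md_geom (hb : 1 < b) : mdVal b (fun _ => b - 1) = 1 := by
  have hb0 : (1:ℝ) < (b:ℝ) := by exact_mod_cast hb
  have hbne : (b:ℝ) ≠ 0 := by linarith
  unfold mdVal
  have hcast : ((b - 1 : ℕ) : ℝ) = (b:ℝ) - 1 := by
    have : 1 ≤ b := hb.le
    push_cast [this]; ring
  have h1 : ∀ j : ℕ, ((b - 1 : ℕ) : ℝ) / (b:ℝ) ^ (j + 1)
      = (((b:ℝ) - 1) / b) * ((b:ℝ)⁻¹) ^ j := by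
    intro j
    rw [hcast, pow_succ', inv_pow]
    field_simp
    try ring
  rw [tsum_congr h1, tsum_mul_left, tsum_geometric_of_lt_one (by positivity)
    (by rw [inv_lt_one_iff₀]; right; exact hb0)]
  have h2 : (b:ℝ) - 1 ≠ 0 := by linarith
  have h3 : (1 - (b:ℝ)⁻¹) = ((b:ℝ)-1)/b := by field_simp
  rw [h3]
  field_simp

lemma md_le_one (hb : 1 < b) (u : ℕ → ℕ) (hu : ∀ j, u j < b) : mdVal b u ≤ 1 := by
  have hb0 : (1:ℝ) < (b:ℝ) := by exact_mod_cast hb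
  rw [← md_geom hb]
  apply Summable.tsum_le_tsum _ (md_summable hb u hu) (md_summable hb _ (fun _ => by omega))
  intro j
  apply div_le_div_of_nonneg_right _ (by positivity)
  · exact_mod_cast Nat.le_sub_one_of_lt (hu j)

lemma md_shift (hb : 1 < b) (u : ℕ → ℕ) (hu : ∀ j, u j < b) (l : ℕ) :
    (b:ℝ) ^ l * mdVal b u
      = ((∑ j ∈ range l, u j * b ^ (l - 1 - j) : ℕ) : ℝ) + mdVal b (fun j => u (l + j)) := by
  have hb0 : (0:ℝ) < (b:ℝ) := by positivity
  have hsum := md_summable hb u hu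
  simp only [mdVal]
  have hsplit := Summable.sum_add_tsum_nat_add (f := fun j : ℕ => (u j : ℝ) / (b : ℝ) ^ (j + 1)) l hsum
  have htail : (∑' j : ℕ, (u (j + l) : ℝ) / (b:ℝ) ^ (j + l + 1))
      = ((b:ℝ)^l)⁻¹ * ∑' j : ℕ, (u (l + j) : ℝ) / (b:ℝ) ^ (j + 1) := by
    rw [← tsum_mul_left]
    apply tsum_congr
    intro j
    have : (b:ℝ) ^ (j + l + 1) = (b:ℝ)^l * (b:ℝ)^(j+1) := by
      rw [← pow_add]; ring_nf
    rw [this, Nat.add_comm j l]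
    field_simp
  rw [← hsplit, htail, mul_add]
  have hfin : (b:ℝ)^l * (∑ j ∈ range l, (u j : ℝ) / (b:ℝ) ^ (j + 1))
      = ((∑ j ∈ range l, u j * b ^ (l - 1 - j) : ℕ) : ℝ) := by
    push_cast
    rw [Finset.mul_sum]
    apply Finset.sum_congr rfl
    intro j hj
    have hjl : j < l := Finset.mem_range.mp hj
    have hexp : (l - 1 - j) + (j + 1) = l := by omega
    have : (b:ℝ) ^ l = (b:ℝ)^(l-1-j) * (b:ℝ)^(j+1) := by rw [← pow_add, hexp]
    rw [this]
    field_simp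
  rw [hfin]
  congr 1
  rw [← mul_assoc]
  rw [mul_inv_cancel₀ (by positivity), one_mul]

lemma md_mem {W : Finset ℕ} (u : ℕ → ℕ) (hu : ∀ j, u j ∈ W) :
    mdVal b u ∈ missingDigitSet b W := ⟨u, hu, rfl⟩

end Aux
section Mid

variable {b : ℕ} {w : ℕ → ℕ}

/-- tail value of digit expansion -/
noncomputable def Ydig (b : ℕ) (w : ℕ → ℕ) (k : ℕ) : ℝ := mdVal b (fun j => w (k + j))

/-- integer value of digit block -/
def ANat (b : ℕ) (w : ℕ → ℕ) (k l : ℕ) : ℕ := ∑ j ∈ Finset.range l, w (k + j) * b ^ (l - 1 - j)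

lemma Ydig_zero (b : ℕ) (w : ℕ → ℕ) : Ydig b w 0 = mdVal b w := by
  have h : (fun j => w (0 + j)) = w := funext fun j => by rw [Nat.zero_add]
  rw [Ydig, h]

lemma Ydig_shift (hb : 1 < b) (hwb : ∀ j, w j < b) (k l : ℕ) :
    (b:ℝ) ^ l * Ydig b w k = (ANat b w k l : ℝ) + Ydig b w (k + l) := by
  have h := md_shift hb (fun j => w (k + j)) (fun j => hwb _) l
  have h2 : (fun j => w (k + (l + j))) = (fun j => w ((k + l) + j)) :=
    funext fun j => congrArg w (by omega)
  rw [Ydig, h, ANat, Ydig, ← h2]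

lemma Ydig_nonneg (b : ℕ) (w : ℕ → ℕ) (k : ℕ) : 0 ≤ Ydig b w k := md_nonneg _

lemma Ydig_le_one (hb : 1 < b) (hwb : ∀ j, w j < b) (k : ℕ) : Ydig b w k ≤ 1 :=
  md_le_one hb _ (fun j => hwb _)

lemma Ydig_succ (hb : 1 < b) (hwb : ∀ j, w j < b) (k : ℕ) :
    (b:ℝ) * Ydig b w k = (w k : ℝ) + Ydig b w (k + 1) := by
  have h := Ydig_shift hb hwb k 1
  rw [pow_one] at h
  rw [h]
  congr 1
  simp [ANat]

end Mid
lemma int_eq_of_abs_lt {z : ℤ} (h : |(z:ℝ)| < 1) : z = 0 := by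
  have h' : (|z| : ℤ) < 1 := by
    have : ((|z| : ℤ) : ℝ) < 1 := by rw [Int.cast_abs]; exact h
    exact_mod_cast this
  have := abs_lt.mp h'
  omega

lemma nat_eq_of_abs_lt {a c : ℕ} (h : |(a:ℝ) - (c:ℝ)| < 1) : a = c := by
  have : ((a:ℤ) - (c:ℤ)) = 0 := int_eq_of_abs_lt (by push_cast; exact h)
  omega

set_option maxHeartbeats 1000000 in
lemma mem_of_close (b : ℕ) (hb : 3 ≤ b) (W : Finset ℕ) (hWsub : W ⊆ Finset.range b)
    (w : ℕ → ℕ) (hw : ∀ j, w j ∈ W)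
    (r : ℚ) (q : ℕ) (hq : q = r.den) (K : ℕ)
    (hqb : b ≤ q) (hq2 : 2 ≤ q)
    (d : ℝ) (hd : d = |mdVal b w - (r:ℝ)|)
    (hM : (b:ℝ) ^ (K + 1) * d ≤ 1 / (8 * q))
    (hKcard : ∃ m : ℕ, 2 * q < b ^ m ∧ K = W.card ^ m) :
    (r:ℝ) ∈ missingDigitSet b W := by
  have hb1 : 1 < b := by omega
  have hbR : (1:ℝ) < (b:ℝ) := by exact_mod_cast hb1
  have hbR0 : (0:ℝ) < (b:ℝ) := by linarith
  have hqR : (2:ℝ) ≤ (q:ℝ) := by exact_mod_cast hq2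
  have hqR0 : (0:ℝ) < (q:ℝ) := by linarith
  have hqbR : (b:ℝ) ≤ (q:ℝ) := by exact_mod_cast hqb
  have hwb : ∀ j, w j < b := fun j => Finset.mem_range.mp (hWsub (hw j))
  have hd0 : 0 ≤ d := hd ▸ abs_nonneg _
  have hpow1 : (1:ℝ) ≤ (b:ℝ) ^ (K + 1) := one_le_pow₀ hbR.le
  have hdsmall : d ≤ 1 / (8 * q) := by nlinarith
  have hq16 : 1 / (8*(q:ℝ)) ≤ 1/16 := by
    rw [div_le_div_iff₀ (by positivity) (by norm_num)]
    linarith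
  have hq8q : 1 / (8*(q:ℝ)) < 1/q := by
    rw [div_lt_div_iff₀ (by positivity) hqR0]
    nlinarith
  set ξ := mdVal b w with hξdef
  have hξ0 : 0 ≤ ξ := md_nonneg _
  have hξ1 : ξ ≤ 1 := md_le_one hb1 _ hwb
  have hrd : |ξ - (r:ℝ)| ≤ 1 / (8*q) := le_trans (le_of_eq hd.symm) hdsmall
  have habs := abs_le.mp hrd
  have hrlow : -(1 / (8 * (q:ℝ))) ≤ (r:ℝ) := by linarith [habs.2]
  have hrhigh : (r:ℝ) ≤ 1 + 1 / (8 * q) := by linarith [habs.1]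
  have hcast : (r:ℝ) = (r.num : ℝ) / (q:ℝ) := by rw [Rat.cast_def, hq]
  have hnum_pos : 0 < r.num := by
    by_contra hcon
    push_neg at hcon
    have h0 : r.num ≠ 0 := by
      intro h0
      have : r = 0 := Rat.num_eq_zero.mp h0
      rw [this] at hq; simp at hq; omega
    have hle' : r.num ≤ -1 := by omega
    have hle : (r.num:ℝ) ≤ -1 := by exact_mod_cast hle' 
    rw [hcast] at hrlow
    have h2 : (r.num:ℝ)/q ≤ -1/q := by gcongr
    have h3 : (-1:ℝ)/q < -(1/(8*q)) := by
      rw [neg_div, neg_lt_neg_iff, div_lt_div_iff₀ (by positivity) hqR0]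
      nlinarith
    linarith
  have hnum_lt : r.num < q := by
    by_contra hcon
    push_neg at hcon
    have hne : r.num ≠ (q:ℤ) := by
      intro heq
      have hred := r.reduced
      rw [← hq] at hred
      have : r.num.natAbs = q := by omega
      rw [this] at hred
      rw [Nat.Coprime, Nat.gcd_self] at hred
      omega
    have hge' : (q:ℤ) + 1 ≤ r.num := by omega
    have hge : ((q:ℝ) + 1) ≤ (r.num:ℝ) := by exact_mod_cast hge'
    rw [hcast] at hrhigh
    rw [div_le_iff₀ hqR0] at hrhigh
    have h8 : (1 + 1/(8*(q:ℝ))) * q = q + 1/8 := by field_simp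
    rw [h8] at hrhigh
    linarith
  set p := r.num.toNat with hpdef
  have hpnum : (p:ℤ) = r.num := Int.toNat_of_nonneg hnum_pos.le
  have hp1 : 1 ≤ p := by omega
  have hpq : p < q := by omega
  have hcop : Nat.Coprime q p := by
    have hred := r.reduced
    rw [← hq] at hred
    have : r.num.natAbs = p := by omega
    rw [this] at hred
    exact hred.symm
  have hrpq : (r:ℝ) = (p:ℝ) / q := by
    rw [hcast]; congr 1; exact_mod_cast hpnum.symm
  -- the orbit
  set pk : ℕ → ℕ := fun k => b ^ k * p % q with hpkdef
  set ρ : ℕ → ℝ := fun k => (pk k : ℝ) / q with hρdef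
  have hpk_lt : ∀ k, pk k < q := fun k => Nat.mod_lt _ (by omega)
  have hρmem : ∀ k, (b:ℝ) ^ k * (r:ℝ) = ((b ^ k * p / q : ℕ) : ℝ) + ρ k := by
    intro k
    have h := Nat.div_add_mod (b ^ k * p) q
    have h' : (q:ℝ) * ((b ^ k * p / q : ℕ):ℝ) + (pk k : ℝ) = (b:ℝ)^k * p := by
      exact_mod_cast congrArg (fun n : ℕ => (n : ℝ)) h
    rw [hrpq, hρdef]
    field_simp
    linarith
  have hpk_shift : ∀ s t : ℕ, pk (s + t) = b ^ t * pk s % q := by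
    intro s t
    show b ^ (s+t) * p % q = b ^ t * (b ^ s * p % q) % q
    have h1 : b ^ (s+t) * p = b ^ t * (b ^ s * p) := by ring
    rw [h1]
    exact ((Nat.mod_modEq (b ^ s * p) q).mul_left (b ^ t)).symm
  
  have hY0 : Ydig b w 0 = ξ := Ydig_zero b w
  by_cases hdvd : q ∣ b ^ (K + 1)
  · -- terminating expansion case
    set J := K + 1 with hJdef
    have hPd : q ∣ b ^ J * p := hdvd.mul_right p
    set P := b ^ J * p / q with hPdef
    have hP : P * q = b ^ J * p := Nat.div_mul_cancel hPd
    have hcastPq : (P:ℝ) * q = (b:ℝ)^J * p := by exact_mod_cast hP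
    have hrJ : (b:ℝ) ^ J * (r:ℝ) = (P:ℝ) := by
      rw [hrpq]
      field_simp
      linarith
    have hsh := Ydig_shift hb1 hwb 0 J
    rw [hY0, Nat.zero_add] at hsh
    -- Y J = g + (P - AN), g := b^J (ξ - r)
    have hgle : |(b:ℝ) ^ J * (ξ - (r:ℝ))| ≤ 1 / (8 * q) := by
      rw [abs_mul, abs_of_nonneg (by positivity : (0:ℝ) ≤ (b:ℝ)^J), ← hd]
      exact hM
    have hexpand : (b:ℝ)^J * (ξ - (r:ℝ)) = (b:ℝ)^J * ξ - (b:ℝ)^J * (r:ℝ) := by ring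
    have hYJ : Ydig b w J = (b:ℝ)^J * (ξ - (r:ℝ)) + ((P:ℝ) - (ANat b w 0 J : ℝ)) := by
      rw [hexpand, hrJ]
      linarith [hsh]
    have hz01 : (P:ℤ) - (ANat b w 0 J : ℤ) = 0 ∨ (P:ℤ) - (ANat b w 0 J : ℤ) = 1 := by
      have hY0' := Ydig_nonneg b w J
      have hY1' := Ydig_le_one hb1 hwb J
      have habs' := abs_le.mp hgle
      have hlow : (-1:ℝ) < ((P:ℤ) - (ANat b w 0 J : ℤ) : ℝ) := by
        push_cast
        linarith [hYJ, habs'.1, habs'.2, hq16]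
      have hhigh : (((P:ℤ) - (ANat b w 0 J : ℤ) : ℝ)) < 2 := by
        push_cast
        linarith [hYJ, habs'.1, habs'.2, hq16]
      have h1 : (-1:ℤ) < (P:ℤ) - (ANat b w 0 J : ℤ) := by exact_mod_cast hlow
      have h2 : ((P:ℤ) - (ANat b w 0 J : ℤ)) < 2 := by exact_mod_cast hhigh
      omega
    have hq8 : 1 / (8 * (q:ℝ)) < 1 / (b:ℝ) := by
      rw [div_lt_div_iff₀ (by positivity) hbR0]
      nlinarith
    have hYsucc := Ydig_succ hb1 hwb J
    rcases hz01 with hz | hz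
    · -- P = AN, pad with zeros
      have hPA : P = ANat b w 0 J := by omega
      have hYJd : |Ydig b w J| < 1 / (b:ℝ) := by
        rw [hYJ, hPA]
        simp only [sub_self, add_zero]
        exact lt_of_le_of_lt hgle hq8
      by_cases h0W : 0 ∈ W
      · set u : ℕ → ℕ := fun j => if j < J then w j else 0 with hudef
        have huW : ∀ j, u j ∈ W := by
          intro j; rw [hudef]; by_cases h : j < J <;> simp [h, hw j, h0W]
        have hub : ∀ j, u j < b := fun j => Finset.mem_range.mp (hWsub (huW j))
        have hsh2 := md_shift hb1 u hub J
        have hfront : (∑ j ∈ Finset.range J, u j * b ^ (J - 1 - j)) = ANat b w 0 J := by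
          apply Finset.sum_congr rfl
          intro j hj
          rw [hudef]
          simp only [Finset.mem_range.mp hj, if_true, Nat.zero_add]
        have htail : mdVal b (fun j => u (J + j)) = 0 := by
          have : (fun j => u (J + j)) = fun _ => 0 := by
            funext j; rw [hudef]; simp
          rw [this, mdVal]
          simp
        rw [hfront, htail, add_zero] at hsh2
        have hval : mdVal b u = (r:ℝ) := by
          have hbJ : (0:ℝ) < (b:ℝ)^J := by positivity
          rw [← hPA] at hsh2
          apply mul_left_cancel₀ (ne_of_gt hbJ)
          rw [hsh2, hrJ]
        rw [← hval]
        exact md_mem u huW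
      · exfalso
        have hwJ : 1 ≤ w J := by
          rcases Nat.eq_zero_or_pos (w J) with h | h
          · exact absurd (h ▸ hw J) h0W
          · exact h
        have hY1b : 1 / (b:ℝ) ≤ Ydig b w J := by
          have h2 : (1:ℝ) ≤ (w J : ℝ) := by exact_mod_cast hwJ
          have h3 := Ydig_nonneg b w (J+1)
          rw [div_le_iff₀ hbR0, mul_comm]
          linarith [hYsucc]
        have habs2 := abs_lt.mp hYJd
        linarith [habs2.2, hY1b]
    · -- P = AN + 1, pad with (b-1)s
      have hPA : P = ANat b w 0 J + 1 := by omega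
      have hYJd : |Ydig b w J - 1| < 1 / (b:ℝ) := by
        have : Ydig b w J - 1 = (b:ℝ)^J * (ξ - (r:ℝ)) := by
          rw [hYJ, hPA]; push_cast; ring
        rw [this]
        exact lt_of_le_of_lt hgle hq8
      by_cases hbW : b - 1 ∈ W
      · set u : ℕ → ℕ := fun j => if j < J then w j else b - 1 with hudef
        have huW : ∀ j, u j ∈ W := by
          intro j; rw [hudef]; by_cases h : j < J <;> simp [h, hw j, hbW]
        have hub : ∀ j, u j < b := fun j => Finset.mem_range.mp (hWsub (huW j))
        have hsh2 := md_shift hb1 u hub J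
        have hfront : (∑ j ∈ Finset.range J, u j * b ^ (J - 1 - j)) = ANat b w 0 J := by
          apply Finset.sum_congr rfl
          intro j hj
          rw [hudef]
          simp only [Finset.mem_range.mp hj, if_true, Nat.zero_add]
        have htail : mdVal b (fun j => u (J + j)) = 1 := by
          have : (fun j => u (J + j)) = fun _ => b - 1 := by
            funext j; rw [hudef]; simp
          rw [this]
          exact md_geom hb1
        rw [hfront, htail] at hsh2
        have hval : mdVal b u = (r:ℝ) := by
          have hbJ : (0:ℝ) < (b:ℝ)^J := by positivity
          have hPA' : (P:ℝ) = (ANat b w 0 J : ℝ) + 1 := by exact_mod_cast hPA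
          apply mul_left_cancel₀ (ne_of_gt hbJ)
          rw [hsh2, hrJ, hPA']
        rw [← hval]
        exact md_mem u huW
      · exfalso
        have hwJ : w J ≤ b - 2 := by
          have h1 := hwb J
          have h2 : w J ≠ b - 1 := fun h => hbW (h ▸ hw J)
          omega
        have hY1b : Ydig b w J ≤ 1 - 1 / (b:ℝ) := by
          have h2 : (w J : ℝ) ≤ (b:ℝ) - 2 := by
            have : (w J : ℝ) ≤ ((b - 2 : ℕ) : ℝ) := by exact_mod_cast hwJ
            have hc : ((b-2:ℕ):ℝ) = (b:ℝ) - 2 := by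
              have : 2 ≤ b := by omega
              push_cast [this]; ring
            linarith [hc ▸ this]
          have h3 := Ydig_le_one hb1 hwb (J+1)
          have h4 : (b:ℝ) * Ydig b w J ≤ (b:ℝ) - 1 := by linarith [hYsucc]
          have h5 : Ydig b w J ≤ ((b:ℝ) - 1)/b := by
            rw [le_div_iff₀ hbR0, mul_comm]
            exact h4
          have h6 : ((b:ℝ) - 1)/b = 1 - 1/b := by field_simp
          linarith [h6 ▸ h5]
        have habs2 := abs_lt.mp hYJd
        linarith [habs2.1]
  · -- periodic case
    have hpk_pos : ∀ k, k ≤ K + 1 → 0 < pk k := by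
      intro k hk
      rcases Nat.eq_zero_or_pos (pk k) with h0 | h
      · exfalso
        have h1 : q ∣ b ^ k * p := Nat.dvd_of_mod_eq_zero h0
        have h2 : q ∣ b ^ k := hcop.dvd_of_dvd_mul_right h1
        exact hdvd (h2.trans (pow_dvd_pow b hk))
      · exact h
    have hbkd : ∀ k, k ≤ K + 1 → (b:ℝ)^k * d ≤ 1/(8*q) := by
      intro k hk
      calc (b:ℝ)^k * d ≤ (b:ℝ)^(K+1)*d :=
            mul_le_mul_of_nonneg_right (pow_le_pow_right₀ hbR.le hk) hd0
        _ ≤ _ := hM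
    have hρ_lb : ∀ k, k ≤ K+1 → 1/(q:ℝ) ≤ ρ k := by
      intro k hk
      have h1 : (1:ℝ) ≤ (pk k:ℝ) := by exact_mod_cast hpk_pos k hk
      show 1/(q:ℝ) ≤ (pk k:ℝ)/q
      gcongr
    have hρ_ub : ∀ k, ρ k ≤ 1 - 1/(q:ℝ) := by
      intro k
      have h0 : pk k ≤ q - 1 := by have := hpk_lt k; omega
      have h1 : (pk k:ℝ) ≤ (q:ℝ) - 1 := by
        have h2 : ((pk k:ℕ):ℝ) ≤ ((q - 1:ℕ):ℝ) := by exact_mod_cast h0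
        have h3 : ((q-1:ℕ):ℝ) = (q:ℝ) - 1 := by
          have : 1 ≤ q := by omega
          push_cast [this]; ring
        linarith [h3 ▸ h2]
      show (pk k:ℝ)/q ≤ 1 - 1/q
      have h4 : (1 - 1/(q:ℝ))*q = q - 1 := by field_simp
      rw [div_le_iff₀ hqR0, h4]
      exact h1
    have hρ0 : ∀ k, 0 ≤ ρ k := fun k => by positivity
    -- c_k = 0 : no wrap-around
    have key : ∀ k, k ≤ K + 1 → |Ydig b w k - ρ k| ≤ (b:ℝ)^k * d := by
      intro k hk
      have hsh := Ydig_shift hb1 hwb 0 k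
      rw [hY0, Nat.zero_add] at hsh
      have hrr := hρmem k
      have hxp : (b:ℝ)^k*(ξ - (r:ℝ)) = (b:ℝ)^k*ξ - (b:ℝ)^k*(r:ℝ) := by ring
      have hceq : ((ANat b w 0 k):ℝ) - ((b ^ k * p / q : ℕ):ℝ)
          = (b:ℝ)^k*(ξ - (r:ℝ)) - (Ydig b w k - ρ k) := by
        linarith [hsh, hrr, hxp]
      have hgb : |(b:ℝ)^k*(ξ - (r:ℝ))| = (b:ℝ)^k * d := by
        rw [abs_mul, abs_of_nonneg (by positivity : (0:ℝ) ≤ (b:ℝ)^k), ← hd]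
      have hgsmall : |(b:ℝ)^k*(ξ - (r:ℝ))| ≤ 1/(8*q) := by
        rw [hgb]; exact hbkd k hk
      have habsg := abs_le.mp hgsmall
      have hYub := Ydig_le_one hb1 hwb k
      have hYlb := Ydig_nonneg b w k
      have hρl := hρ_lb k hk
      have hρu := hρ_ub k
      have hc0 : ANat b w 0 k = b ^ k * p / q := by
        apply nat_eq_of_abs_lt
        rw [hceq, abs_lt]
        constructor
        · linarith [habsg.1, habsg.2, hq16, hq8q]
        · linarith [habsg.1, habsg.2, hq16, hq8q]
      have hc0' : ((ANat b w 0 k):ℝ) = ((b ^ k * p / q : ℕ):ℝ) := by exact_mod_cast hc0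
      have : Ydig b w k - ρ k = (b:ℝ)^k * (ξ - (r:ℝ)) := by
        have := hceq
        rw [hc0'] at this
        linarith
      rw [this, hgb]
    -- pigeonhole setup
    obtain ⟨m, hm2q, hKm⟩ := hKcard
    have hbmR : (2*(q:ℝ)) < (b:ℝ)^m := by exact_mod_cast hm2q
    have HH : ∀ x y : ℕ, x < y → y ≤ K → (∀ i : Fin m, w (x + i) = w (y + i)) → pk x = pk y := by
      intro x y hxy hyK hfeq
      have hshx := Ydig_shift hb1 hwb x m
      have hshy := Ydig_shift hb1 hwb y m
      have hAeq : ANat b w x m = ANat b w y m := by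
        apply Finset.sum_congr rfl
        intro j hj
        have := hfeq ⟨j, Finset.mem_range.mp hj⟩
        simp only [Fin.val_mk] at this
        rw [this]
      have hbm0 : (0:ℝ) < (b:ℝ)^m := by positivity
      have hYb : |Ydig b w x - Ydig b w y| ≤ 1/(b:ℝ)^m := by
        have h1 : (b:ℝ)^m * (Ydig b w x - Ydig b w y) = Ydig b w (x+m) - Ydig b w (y+m) := by
          rw [mul_sub, hshx, hshy, hAeq]; ring
        have h2 : |Ydig b w (x+m) - Ydig b w (y+m)| ≤ 1 := by
          rw [abs_le]
          constructor
          · linarith [Ydig_nonneg b w (x+m), Ydig_le_one hb1 hwb (y+m)]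
          · linarith [Ydig_nonneg b w (y+m), Ydig_le_one hb1 hwb (x+m)]
        have h3 : |Ydig b w x - Ydig b w y| * (b:ℝ)^m ≤ 1 := by
          rw [mul_comm, ← abs_of_nonneg hbm0.le, ← abs_mul, h1]
          exact h2
        rw [le_div_iff₀ hbm0]
        exact h3
      have hkx := key x (by omega)
      have hky := key y (by omega)
      have hbx := hbkd x (by omega)
      have hby := hbkd y (by omega)
      have hbm' : 1/(b:ℝ)^m ≤ 1/(2*q) := by
        apply one_div_le_one_div_of_le (by positivity) hbmR.le
      have hρd : |ρ x - ρ y| < 1/(q:ℝ) := by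
        have htr : |ρ x - ρ y| ≤ |ρ x - Ydig b w x| + |Ydig b w x - Ydig b w y|
            + |Ydig b w y - ρ y| := by
          have t1 := abs_sub_le (ρ x) (Ydig b w x) (ρ y)
          have t2 := abs_sub_le (Ydig b w x) (Ydig b w y) (ρ y)
          linarith
        have e1 : |ρ x - Ydig b w x| ≤ 1/(8*q) := by
          rw [abs_sub_comm]; exact (key x (by omega)).trans hbx
        have e2 : |Ydig b w y - ρ y| ≤ 1/(8*q) := (key y (by omega)).trans hby
        have e3 : |Ydig b w x - Ydig b w y| ≤ 1/(2*q) := hYb.trans hbm'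
        have hsum : 1/(8*(q:ℝ)) + 1/(2*q) + 1/(8*q) < 1/q := by
          have hco : 1/(8*(q:ℝ)) + 1/(2*q) + 1/(8*q) = 3/(4*q) := by
            field_simp
            ring
          rw [hco, div_lt_div_iff₀ (by positivity) hqR0]
          linarith
        linarith
      apply nat_eq_of_abs_lt
      have hsub : (pk x:ℝ) - pk y = (ρ x - ρ y) * q := by
        show (pk x:ℝ) - pk y = ((pk x:ℝ)/q - (pk y:ℝ)/q) * q
        field_simp
      rw [hsub, abs_mul, abs_of_nonneg hqR0.le]
      calc |ρ x - ρ y| * q < (1/q) * q := by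
            apply mul_lt_mul_of_pos_right hρd hqR0
        _ = 1 := by field_simp
    set f : ℕ → (Fin m → ℕ) := fun k i => w (k + i) with hfdef
    have hmaps : ∀ a ∈ Finset.range (K+1), f a ∈ Fintype.piFinset (fun _ : Fin m => W) :=
      fun a _ => Fintype.mem_piFinset.mpr (fun i => hw _)
    have hTcard : (Fintype.piFinset (fun _ : Fin m => W)).card < (Finset.range (K+1)).card := by
      rw [Fintype.card_piFinset]
      simp only [Finset.prod_const, Finset.card_univ, Fintype.card_fin, Finset.card_range]
      omega
    obtain ⟨x, hx, y, hy, hxy, hfxy⟩ :=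
      Finset.exists_ne_map_eq_of_card_lt_of_maps_to hTcard hmaps
    rw [Finset.mem_range] at hx hy
    have hperiod : ∃ s t : ℕ, 1 ≤ t ∧ s + t ≤ K ∧ pk (s + t) = pk s := by
      rcases Nat.lt_or_ge x y with h | h
      · refine ⟨x, y - x, by omega, by omega, ?_⟩
        rw [show x + (y-x) = y by omega]
        exact (HH x y h (by omega) (fun i => congrFun hfxy i)).symm
      · have h' : y < x := by omega
        refine ⟨y, x - y, by omega, by omega, ?_⟩
        rw [show y + (x-y) = x by omega]
        exact (HH y x h' (by omega) (fun i => (congrFun hfxy i).symm)).symm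
    obtain ⟨s, t, ht1, hstK, hper⟩ := hperiod
    have hmod : b ^ t * pk s % q = pk s := by rw [← hpk_shift s t, hper]
    have hdiv : q * (b ^ t * pk s / q) + pk s = b ^ t * pk s := by
      conv_rhs => rw [← Nat.div_add_mod (b ^ t * pk s) q]
      rw [hmod]
    have hρst : (b:ℝ)^t * ρ s = ((b ^ t * pk s / q : ℕ):ℝ) + ρ s := by
      have h' : (q:ℝ) * ((b ^ t * pk s / q : ℕ):ℝ) + (pk s:ℝ) = (b:ℝ)^t * (pk s:ℝ) := by
        exact_mod_cast hdiv
      show (b:ℝ)^t * ((pk s:ℝ)/q) = ((b ^ t * pk s / q : ℕ):ℝ) + (pk s:ℝ)/q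
      field_simp
      linarith
    have hshs := Ydig_shift hb1 hwb s t
    have hkey_s := key s (by omega)
    have hkey_st := key (s+t) (by omega)
    have hρs_eq : ρ (s+t) = ρ s := by
      show ((pk (s+t):ℕ):ℝ)/q = ((pk s:ℕ):ℝ)/q
      rw [hper]
    have hbst : (b:ℝ)^t * ((b:ℝ)^s * d) = (b:ℝ)^(s+t) * d := by
      rw [pow_add]; ring
    have hbstd := hbkd (s+t) (by omega)
    have hEA : (b ^ t * pk s / q : ℕ) = ANat b w s t := by
      apply nat_eq_of_abs_lt
      have heq : ((b^t*pk s/q:ℕ):ℝ) - (ANat b w s t:ℝ)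
          = (b:ℝ)^t*(ρ s - Ydig b w s) - (ρ (s+t) - Ydig b w (s+t)) := by
        have hxp2 : (b:ℝ)^t*(ρ s - Ydig b w s) = (b:ℝ)^t*ρ s - (b:ℝ)^t*Ydig b w s := by ring
        rw [hρs_eq]
        linarith [hρst, hshs, hxp2]
      have e1 : |(b:ℝ)^t*(ρ s - Ydig b w s)| ≤ 1/(8*q) := by
        rw [abs_mul, abs_of_nonneg (by positivity : (0:ℝ) ≤ (b:ℝ)^t), abs_sub_comm]
        calc (b:ℝ)^t * |Ydig b w s - ρ s| ≤ (b:ℝ)^t * ((b:ℝ)^s * d) := by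
              apply mul_le_mul_of_nonneg_left hkey_s (by positivity)
          _ = (b:ℝ)^(s+t) * d := hbst
          _ ≤ 1/(8*q) := hbstd
      have e2 : |ρ (s+t) - Ydig b w (s+t)| ≤ 1/(8*q) := by
        rw [abs_sub_comm]
        exact hkey_st.trans hbstd
      rw [heq, abs_lt]
      have h1 := abs_le.mp e1
      have h2 := abs_le.mp e2
      constructor
      · linarith [hq16]
      · linarith [hq16]
    have hbt1 : (1:ℝ) < (b:ℝ)^t := by
      apply one_lt_pow₀ hbR (by omega)
    have hρsval : ρ s * ((b:ℝ)^t - 1) = (ANat b w s t:ℝ) := by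
      have h1 : ((b^t*pk s/q:ℕ):ℝ) = (ANat b w s t:ℝ) := by exact_mod_cast hEA
      rw [← h1]
      linarith [hρst]
    set uper : ℕ → ℕ := fun j => w (s + j % t) with huperdef
    have huperW : ∀ j, uper j ∈ W := fun j => hw _
    have huperb : ∀ j, uper j < b := fun j => hwb _
    have hshper := md_shift hb1 uper huperb t
    have hfrontper : (∑ j ∈ Finset.range t, uper j * b^(t-1-j)) = ANat b w s t := by
      apply Finset.sum_congr rfl
      intro j hj
      show w (s + j % t) * b^(t-1-j) = w (s + j) * b^(t-1-j)
      rw [Nat.mod_eq_of_lt (Finset.mem_range.mp hj)]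
    have htailper : (fun j => uper (t + j)) = uper := by
      funext j
      show w (s + (t + j) % t) = w (s + j % t)
      rw [Nat.add_mod_left]
    rw [hfrontper, htailper] at hshper
    have hperval : mdVal b uper = ρ s := by
      have h1 : mdVal b uper * ((b:ℝ)^t - 1) = (ANat b w s t:ℝ) := by linarith [hshper]
      have h2 : ((b:ℝ)^t - 1) ≠ 0 := by linarith
      exact mul_right_cancel₀ h2 (h1.trans hρsval.symm)
    have hρsC : ρ s ∈ missingDigitSet b W := hperval ▸ md_mem uper huperW
    -- downward induction to position 0
    have hstep : ∀ k, k + 1 ≤ K + 1 → ρ (k+1) ∈ missingDigitSet b W →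
        ρ k ∈ missingDigitSet b W := by
      intro k hk hC
      have hpk1 : pk (k+1) = b * pk k % q := by
        have h := hpk_shift k 1
        rw [pow_one] at h
        exact h
      have hdiv2 : q * (b * pk k / q) + pk (k+1) = b * pk k := by
        rw [hpk1]
        exact Nat.div_add_mod _ _
      have hρk : (b:ℝ) * ρ k = ((b * pk k / q : ℕ):ℝ) + ρ (k+1) := by
        have h' : (q:ℝ) * ((b * pk k / q : ℕ):ℝ) + (pk (k+1):ℝ) = (b:ℝ) * (pk k:ℝ) := by
          exact_mod_cast hdiv2
        show (b:ℝ) * ((pk k:ℝ)/q) = ((b * pk k / q : ℕ):ℝ) + (pk (k+1):ℝ)/q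
        field_simp
        linarith
      have hYk := Ydig_succ hb1 hwb k
      have hkeyk := key k (by omega)
      have hkeyk1 := key (k+1) hk
      have hbk1 := hbkd (k+1) hk
      have hbk : (b:ℝ) * ((b:ℝ)^k * d) = (b:ℝ)^(k+1) * d := by
        rw [pow_succ]; ring
      have haw : (b * pk k / q : ℕ) = w k := by
        apply nat_eq_of_abs_lt
        have heq : ((b*pk k/q:ℕ):ℝ) - (w k:ℝ)
            = (b:ℝ)*(ρ k - Ydig b w k) - (ρ (k+1) - Ydig b w (k+1)) := by
          have hxp3 : (b:ℝ)*(ρ k - Ydig b w k) = (b:ℝ)*ρ k - (b:ℝ)*Ydig b w k := by ring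
          linarith [hρk, hYk, hxp3]
        have e1 : |(b:ℝ)*(ρ k - Ydig b w k)| ≤ 1/(8*q) := by
          rw [abs_mul, abs_of_nonneg hbR0.le, abs_sub_comm]
          calc (b:ℝ) * |Ydig b w k - ρ k| ≤ (b:ℝ) * ((b:ℝ)^k * d) := by
                apply mul_le_mul_of_nonneg_left hkeyk hbR0.le
            _ = (b:ℝ)^(k+1) * d := hbk
            _ ≤ 1/(8*q) := hbk1
        have e2 : |ρ (k+1) - Ydig b w (k+1)| ≤ 1/(8*q) := by
          rw [abs_sub_comm]
          exact hkeyk1.trans hbk1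
        rw [heq, abs_lt]
        have h1 := abs_le.mp e1
        have h2 := abs_le.mp e2
        constructor
        · linarith [hq16]
        · linarith [hq16]
      obtain ⟨v, hv, hvval⟩ := hC
      have hvval' : ρ (k+1) = mdVal b v := hvval
      have hvb : ∀ j, v j < b := fun j => Finset.mem_range.mp (hWsub (hv j))
      set u2 : ℕ → ℕ := fun j => if j = 0 then w k else v (j-1) with hu2def
      have hu2W : ∀ j, u2 j ∈ W := by
        intro j
        show (if j = 0 then w k else v (j-1)) ∈ W
        by_cases h : j = 0 <;> simp [h, hw k, hv _]
      have hu2b : ∀ j, u2 j < b := fun j => Finset.mem_range.mp (hWsub (hu2W j))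
      have hsh2 := md_shift hb1 u2 hu2b 1
      rw [pow_one] at hsh2
      have hfront2 : (∑ j ∈ Finset.range 1, u2 j * b^(1-1-j)) = w k := by
        rw [Finset.sum_range_one]
        show (if (0:ℕ) = 0 then w k else v (0-1)) * b ^ (1-1-0) = w k
        simp
      have htail2 : (fun j => u2 (1 + j)) = v := by
        funext j
        show (if 1 + j = 0 then w k else v (1+j-1)) = v j
        simp
      rw [hfront2, htail2, ← hvval'] at hsh2
      have hval2 : mdVal b u2 = ρ k := by
        apply mul_left_cancel₀ (ne_of_gt hbR0)
        rw [hsh2, hρk, haw]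
      exact hval2 ▸ md_mem u2 hu2W
    have hdown : ∀ i, i ≤ s → ρ (s - i) ∈ missingDigitSet b W := by
      intro i
      induction i with
      | zero => intro _; simpa using hρsC
      | succ n ih =>
        intro hns
        have h1 : s - (n+1) + 1 = s - n := by omega
        have h2 := hstep (s - (n+1)) (by omega) (by rw [h1]; exact ih (by omega))
        exact h2
    have hfin := hdown s le_rfl
    rw [Nat.sub_self] at hfin
    have hρ0r : ρ 0 = (r:ℝ) := by
      show ((pk 0:ℕ):ℝ)/q = (r:ℝ)
      have : pk 0 = p := by
        show b ^ 0 * p % q = p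
        rw [pow_zero, one_mul]
        exact Nat.mod_eq_of_lt hpq
      rw [this, hrpq]
    rwa [hρ0r] at hfin
lemma exists_Q (b : ℕ) (hb : 3 ≤ b) (W : Finset ℕ) (hW2 : 2 ≤ W.card)
    (Δ : ℝ) (hΔ : Δ = Real.log W.card / Real.log b)
    (δ : ℝ) (hδ : (2 * b : ℝ) ^ Δ < δ) :
    ∃ Q : ℕ, 2 ≤ Q ∧ b ≤ Q ∧ ∀ q : ℕ, Q ≤ q →
      8 * (q:ℝ) * (b:ℝ) ^ (W.card ^ (Nat.log b (2*q) + 1) + 1)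
        ≤ (b:ℝ) ^ (δ * (q:ℝ) ^ Δ) := by
  have hb1 : 1 < b := by omega
  have hbR : (1:ℝ) < (b:ℝ) := by exact_mod_cast hb1
  have hbR0 : (0:ℝ) < (b:ℝ) := by linarith
  have hlogb : 0 < Real.log b := Real.log_pos hbR
  have hWR : (2:ℝ) ≤ (W.card:ℝ) := by exact_mod_cast hW2
  have hWR0 : (0:ℝ) < (W.card:ℝ) := by linarith
  have hlogW : 0 < Real.log W.card := Real.log_pos (by linarith)
  have hΔpos : 0 < Δ := by rw [hΔ]; positivity
  set ε := δ - (2*(b:ℝ))^Δ with hεdef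
  have hεpos : 0 < ε := by rw [hεdef]; linarith
  -- the eventual inequality on the real line
  have hE1 : ∀ᶠ x : ℝ in Filter.atTop, Real.log x ≤ (ε * Real.log b / 2) * x ^ Δ := by
    have hb2 := (isLittleO_log_rpow_atTop hΔpos).bound (by positivity :
      (0:ℝ) < ε * Real.log b / 2)
    filter_upwards [hb2, Filter.eventually_ge_atTop (1:ℝ)] with x hx hx1
    have h1 : ‖Real.log x‖ = Real.log x := by
      rw [Real.norm_eq_abs, abs_of_nonneg (Real.log_nonneg hx1)]
    have h2 : ‖x ^ Δ‖ = x ^ Δ := by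
      rw [Real.norm_eq_abs, abs_of_nonneg (Real.rpow_nonneg (by linarith) Δ)]
    rw [h1, h2] at hx
    exact hx
  have hE2 : ∀ᶠ x : ℝ in Filter.atTop,
      (Real.log 8 / Real.log b + 1) * (2/ε) ≤ x ^ Δ :=
    (tendsto_rpow_atTop hΔpos).eventually_ge_atTop _
  have hEall : ∀ᶠ x : ℝ in Filter.atTop,
      Real.log (8 * x) / Real.log b + 1 ≤ ε * x ^ Δ := by
    filter_upwards [hE1, hE2, Filter.eventually_ge_atTop (1:ℝ)] with x h1 h2 hx1
    have hx0 : (0:ℝ) < x := by linarith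
    have hlog8x : Real.log (8 * x) = Real.log 8 + Real.log x :=
      Real.log_mul (by norm_num) (ne_of_gt hx0)
    have hxΔ0 : 0 ≤ x ^ Δ := Real.rpow_nonneg hx0.le Δ
    have h2' : (Real.log 8 / Real.log b + 1) ≤ (ε/2) * x ^ Δ := by
      calc Real.log 8 / Real.log b + 1
          = ((Real.log 8 / Real.log b + 1) * (2/ε)) * (ε/2) := by field_simp
        _ ≤ x ^ Δ * (ε/2) := by
            apply mul_le_mul_of_nonneg_right h2 (by positivity)
        _ = (ε/2) * x ^ Δ := by ring
    have h1' : Real.log x / Real.log b ≤ (ε/2) * x ^ Δ := by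
      rw [div_le_iff₀ hlogb]
      calc Real.log x ≤ (ε * Real.log b / 2) * x ^ Δ := h1
        _ = (ε/2) * x ^ Δ * Real.log b := by ring
    rw [hlog8x, add_div]
    linarith
  obtain ⟨x₀, hx₀⟩ := Filter.eventually_atTop.mp hEall
  refine ⟨max (max b 2) ⌈x₀⌉₊, le_max_of_le_left (le_max_right _ _),
    le_max_of_le_left (le_max_left _ _), ?_⟩
  intro q hQq
  have hq2 : 2 ≤ q := le_trans (le_max_of_le_left (le_max_right _ _)) hQq
  have hqb : b ≤ q := le_trans (le_max_of_le_left (le_max_left _ _)) hQq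
  have hqx₀ : x₀ ≤ (q:ℝ) := by
    have h1 : (⌈x₀⌉₊ : ℕ) ≤ q := le_trans (le_max_right _ _) hQq
    calc x₀ ≤ (⌈x₀⌉₊ : ℝ) := Nat.le_ceil x₀
      _ ≤ (q:ℝ) := by exact_mod_cast h1
  have hqR0 : (0:ℝ) < (q:ℝ) := by positivity
  have hqR2 : (2:ℝ) ≤ (q:ℝ) := by exact_mod_cast hq2
  set m : ℕ := Nat.log b (2*q) + 1 with hmdef
  set K : ℕ := W.card ^ m with hKdef
  -- step (a) : (K : ℝ) ≤ (2b)^Δ * q^Δ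
  have hpowlog : (b:ℝ) ^ (Nat.log b (2*q) : ℕ) ≤ (2*(q:ℝ)) := by
    have h1 : b ^ (Nat.log b (2*q)) ≤ 2*q := Nat.pow_log_le_self b (by omega)
    exact_mod_cast h1
  have hmR : (m:ℝ) ≤ Real.log (2*q) / Real.log b + 1 := by
    have h1 : (Nat.log b (2*q) : ℝ) * Real.log b ≤ Real.log (2*q) := by
      rw [← Real.log_pow]
      apply Real.log_le_log (by positivity)
      exact hpowlog
    have h2 : (Nat.log b (2*q) : ℝ) ≤ Real.log (2*q) / Real.log b := by
      rw [le_div_iff₀ hlogb]; exact h1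
    have h3 : (m:ℝ) = (Nat.log b (2*q) : ℝ) + 1 := by rw [hmdef]; push_cast; ring
    linarith
  have hKR : (K:ℝ) ≤ (2*(b:ℝ))^Δ * (q:ℝ)^Δ := by
    have h0 : (K:ℝ) = (W.card:ℝ) ^ (m:ℕ) := by rw [hKdef]; push_cast; ring
    have h1 : (W.card:ℝ) ^ (m:ℕ) = (W.card:ℝ) ^ ((m:ℕ):ℝ) := (Real.rpow_natCast _ m).symm
    have h2 : (W.card:ℝ) ^ ((m:ℕ):ℝ) ≤ (W.card:ℝ) ^ (Real.log (2*q) / Real.log b + 1) :=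
      Real.rpow_le_rpow_of_exponent_le (by linarith) hmR
    have h3 : (W.card:ℝ) ^ (Real.log (2*q) / Real.log b + 1)
        = (W.card:ℝ) ^ (Real.log (2*q) / Real.log b) * W.card := by
      rw [Real.rpow_add hWR0, Real.rpow_one]
    have h4 : (W.card:ℝ) ^ (Real.log (2*q) / Real.log b) = (2*(q:ℝ)) ^ Δ := by
      rw [Real.rpow_def_of_pos hWR0, Real.rpow_def_of_pos (by positivity), hΔ]
      congr 1
      ring
    have h5 : (W.card:ℝ) = (b:ℝ) ^ Δ := by
      rw [Real.rpow_def_of_pos hbR0, hΔ]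
      have hc : Real.log b * (Real.log W.card / Real.log b) = Real.log W.card := by
        field_simp
      rw [hc, Real.exp_log hWR0]
    have h6 : (2*(q:ℝ))^Δ * (b:ℝ)^Δ = (2*(b:ℝ))^Δ * (q:ℝ)^Δ := by
      rw [← Real.mul_rpow (by positivity) (by positivity),
        ← Real.mul_rpow (by positivity) (by positivity)]
      congr 1
      ring
    calc (K:ℝ) = (W.card:ℝ) ^ ((m:ℕ):ℝ) := by rw [h0, h1]
      _ ≤ (W.card:ℝ) ^ (Real.log (2*q) / Real.log b + 1) := h2
      _ = (2*(q:ℝ))^Δ * (b:ℝ)^Δ := by rw [h3, h4, h5]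
      _ = (2*(b:ℝ))^Δ * (q:ℝ)^Δ := h6
  -- step (b) : compare exponents
  have hq8pos : (0:ℝ) < 8*(q:ℝ) := by positivity
  have hlhs : 8*(q:ℝ)*(b:ℝ)^(K+1) = (b:ℝ)^(Real.log (8*(q:ℝ))/Real.log b + ((K:ℝ)+1)) := by
    rw [Real.rpow_add hbR0]
    congr 1
    · have hlb := Real.rpow_logb hbR0 (ne_of_gt hbR) hq8pos
      rw [Real.logb] at hlb
      rw [hlb]
    · rw [← Real.rpow_natCast (b:ℝ) (K+1)]
      congr 1
      push_cast
      ring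
  rw [hlhs]
  apply Real.rpow_le_rpow_of_exponent_le hbR.le
  have hev := hx₀ (q:ℝ) hqx₀
  have hδsplit : δ * (q:ℝ)^Δ = (2*(b:ℝ))^Δ * (q:ℝ)^Δ + ε * (q:ℝ)^Δ := by
    rw [hεdef]; ring
  rw [hδsplit]
  have h8q : Real.log (8*(q:ℝ)) = Real.log (8*(q:ℝ)) := rfl
  linarith [hev, hKR]
/-- for `ξ ∈ C_{b,W}` and `δ > (2b)^Δ`, only finitely many rationals
`p/q ∉ C` satisfy `|ξ - p/q| ≤ b^{-δ q^Δ}`. -/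
theorem stmt_7 (b : ℕ) (hb : 3 ≤ b) (W : Finset ℕ)
    (hWsub : W ⊆ Finset.range b) (hW2 : 2 ≤ W.card) (hWne : W ≠ Finset.range b)
    (Δ : ℝ) (hΔ : Δ = Real.log W.card / Real.log b)
    (ξ : ℝ) (hξ : ξ ∈ missingDigitSet b W)
    (δ : ℝ) (hδ : (2 * b : ℝ) ^ Δ < δ) :
    {r : ℚ | (r : ℝ) ∉ missingDigitSet b W ∧
      |ξ - (r : ℝ)| ≤ (b : ℝ) ^ (-(δ * (r.den : ℝ) ^ Δ))}.Finite := by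
  obtain ⟨w, hw, hξw⟩ := hξ
  have hb1 : 1 < b := by omega
  have hbR : (1:ℝ) < (b:ℝ) := by exact_mod_cast hb1
  have hbR0 : (0:ℝ) < (b:ℝ) := by linarith
  have hwb : ∀ j, w j < b := fun j => Finset.mem_range.mp (hWsub (hw j))
  have hξval : ξ = mdVal b w := hξw
  have hξ0 : 0 ≤ ξ := hξval ▸ md_nonneg w
  have hξ1 : ξ ≤ 1 := hξval ▸ md_le_one hb1 w hwb
  have hδpos : 0 < δ :=
    lt_trans (Real.rpow_pos_of_pos (by positivity) Δ) hδ
  obtain ⟨Q, hQ2, hQb, hQkey⟩ := exists_Q b hb W hW2 Δ hΔ δ hδ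
  -- for denominators at least Q the rational must lie in the Cantor set
  have main : ∀ r : ℚ, Q ≤ r.den →
      |ξ - (r:ℝ)| ≤ (b:ℝ) ^ (-(δ * (r.den:ℝ) ^ Δ)) →
      (r:ℝ) ∈ missingDigitSet b W := by
    intro r hden hclose
    set q := r.den with hqdef
    set K := W.card ^ (Nat.log b (2*q) + 1) with hKdef
    have hqR0 : (0:ℝ) < (q:ℝ) := by
      have : 0 < q := by omega
      exact_mod_cast this
    have hrpowpos : (0:ℝ) < (b:ℝ) ^ (δ * (q:ℝ) ^ Δ) := Real.rpow_pos_of_pos hbR0 _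
    have hM : (b:ℝ) ^ (K+1) * |ξ - (r:ℝ)| ≤ 1/(8*q) := by
      have hkey := hQkey q hden
      have hneg : (b:ℝ) ^ (-(δ * (q:ℝ) ^ Δ)) = ((b:ℝ) ^ (δ * (q:ℝ) ^ Δ))⁻¹ :=
        Real.rpow_neg hbR0.le _
      have h1 : |ξ - (r:ℝ)| ≤ ((b:ℝ) ^ (δ * (q:ℝ) ^ Δ))⁻¹ := by
        rw [← hneg]; exact hclose
      have h2 : (b:ℝ)^(K+1) * ((b:ℝ) ^ (δ * (q:ℝ) ^ Δ))⁻¹ ≤ 1/(8*q) := by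
        rw [mul_inv_le_iff₀ hrpowpos, one_div, inv_mul_eq_div, le_div_iff₀ (by positivity)]
        calc (b:ℝ)^(K+1) * (8*q) = 8*q*(b:ℝ)^(K+1) := by ring
          _ ≤ (b:ℝ) ^ (δ * (q:ℝ) ^ Δ) := hkey
      calc (b:ℝ)^(K+1) * |ξ - (r:ℝ)| ≤ (b:ℝ)^(K+1) * ((b:ℝ) ^ (δ * (q:ℝ) ^ Δ))⁻¹ := by
            apply mul_le_mul_of_nonneg_left h1 (by positivity)
        _ ≤ 1/(8*q) := h2
    exact mem_of_close b hb W hWsub w hw r q hqdef K (by omega) (by omega)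
      (|ξ - (r:ℝ)|) (by rw [hξval]) hM
      ⟨Nat.log b (2*q) + 1, Nat.lt_pow_succ_log_self hb1 _, hKdef⟩
  -- bounded numerators
  have hbound : ∀ r : ℚ, |ξ - (r:ℝ)| ≤ (b:ℝ) ^ (-(δ * (r.den:ℝ) ^ Δ)) →
      |r.num| ≤ (2*Q : ℤ) ∨ Q ≤ r.den := by
    intro r hclose
    by_cases hden : Q ≤ r.den
    · right; exact hden
    · left
      have hrp1 : (b:ℝ) ^ (-(δ * (r.den:ℝ) ^ Δ)) ≤ 1 := by
        apply Real.rpow_le_one_of_one_le_of_nonpos hbR.le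
        have : (0:ℝ) ≤ (r.den:ℝ) ^ Δ := Real.rpow_nonneg (by positivity) Δ
        nlinarith
      have hrabs : |(r:ℝ)| ≤ 2 := by
        have h1 := abs_le.mp (hclose.trans hrp1)
        rw [abs_le]
        constructor <;> [linarith [h1.2]; linarith [h1.1]]
      have hden0 : (0:ℝ) < (r.den:ℝ) := by
        have := r.pos
        exact_mod_cast this
      have hnum : |(r.num:ℝ)| ≤ 2 * r.den := by
        have h1 : |(r:ℝ)| = |(r.num:ℝ)| / (r.den:ℝ) := by
          rw [Rat.cast_def, abs_div, abs_of_pos hden0]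
        rw [h1, div_le_iff₀ hden0] at hrabs
        linarith
      have hden' : (r.den:ℝ) ≤ (Q:ℝ) := by
        have : r.den ≤ Q := by omega
        exact_mod_cast this
      have h2 : |(r.num:ℝ)| ≤ 2*(Q:ℝ) := by nlinarith [abs_nonneg (r.num:ℝ)]
      have h3 : ((|r.num|:ℤ):ℝ) ≤ ((2*Q:ℤ):ℝ) := by push_cast; push_cast at h2; linarith
      exact_mod_cast h3
  -- assemble finiteness
  apply Set.Finite.subset (s := {r : ℚ | |r.num| ≤ (2*Q:ℤ) ∧ r.den < Q})
  · have hinj : Function.Injective (fun r : ℚ => (r.num, r.den)) := by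
      intro r1 r2 h
      rw [Prod.mk.injEq] at h
      exact Rat.ext h.1 h.2
    have hfin : ((fun r : ℚ => (r.num, r.den)) ⁻¹'
        ((Set.Icc (-(2*Q:ℤ)) (2*Q:ℤ)) ×ˢ (Set.Iio Q))).Finite := by
      apply Set.Finite.preimage hinj.injOn
      exact ((Set.finite_Icc _ _).prod (Set.finite_Iio _))
    apply hfin.subset
    intro r hr
    obtain ⟨h1, h2⟩ := hr
    constructor
    · simp only [Set.mem_Icc]
      rw [abs_le] at h1
      exact h1
    · exact h2
  · intro r hr
    obtain ⟨hnotC, hclose⟩ := hr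
    have hden : ¬ (Q ≤ r.den) := fun h => hnotC (main r h hclose)
    rcases hbound r hclose with h | h
    · exact ⟨h, by omega⟩
    · exact absurd h hden
end

section
/- Let C ⊆ ℝ^d be the attractor of a unimodular affine rational-preserving IFS, i.e. each contraction has the form f_j(y) = A_j y / q_j + b_j / s_j with A_j ∈ ℤ^{d×d}, det(A_j) ∈ {1, −1}, b_j ∈ ℤ^d, q_j, s_j ∈ ℕ. Then every rational vector p/q ∈ ℚ^d ∩ C has an ultimately periodic address, and the total length of preperiod plus period can be chosen ≪_C q^d. -/
/-- `addrComp f ω n = f (ω 0) ∘ f (ω 1) ∘ ⋯ ∘ f (ω (n-1))`, the composition of the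
first `n` contractions along the address `ω`. -/
def addrComp {E ι : Type*} (f : ι → E → E) (ω : ℕ → ι) : ℕ → E → E
  | 0 => id
  | n + 1 => addrComp f ω n ∘ f (ω n)

lemma addrComp_dist {d J : ℕ} (f : Fin J → (Fin d → ℝ) → (Fin d → ℝ)) (τ : ℝ)
    (hτ : 0 ≤ τ) (hc : ∀ j x y, ‖f j x - f j y‖ ≤ τ * ‖x - y‖) (ω : ℕ → Fin J) :
    ∀ n x y, ‖addrComp f ω n x - addrComp f ω n y‖ ≤ τ ^ n * ‖x - y‖ := by
  intro n
  induction n with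
  | zero => intro x y; simp [addrComp]
  | succ n ih =>
    intro x y
    have h1 : addrComp f ω (n+1) x = addrComp f ω n (f (ω n) x) := rfl
    have h2 : addrComp f ω (n+1) y = addrComp f ω n (f (ω n) y) := rfl
    rw [h1, h2]
    calc ‖addrComp f ω n (f (ω n) x) - addrComp f ω n (f (ω n) y)‖
        ≤ τ ^ n * ‖f (ω n) x - f (ω n) y‖ := ih _ _
      _ ≤ τ ^ n * (τ * ‖x - y‖) :=
          mul_le_mul_of_nonneg_left (hc _ _ _) (pow_nonneg hτ n)
      _ = τ ^ (n+1) * ‖x - y‖ := by ring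

lemma addrComp_orbit {E ι : Type*} (f : ι → E → E) (ω : ℕ → ι) (ξ : ℕ → E)
    (h : ∀ n, f (ω n) (ξ (n+1)) = ξ n) : ∀ n, addrComp f ω n (ξ n) = ξ 0 := by
  intro n
  induction n with
  | zero => rfl
  | succ n ih =>
    show addrComp f ω n (f (ω n) (ξ (n+1))) = ξ 0
    rw [h n]; exact ih

/-- in a unimodular affine rational-preserving IFS, every rational
vector `p/q` of the attractor has an ultimately periodic address whose preperiod
plus period length is `≪_C q^d`. -/
theorem stmt_12 (d J : ℕ) (A : Fin J → Matrix (Fin d) (Fin d) ℤ)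
    (hdet : ∀ j, (A j).det = 1 ∨ (A j).det = -1)
    (q s : Fin J → ℕ) (hq : ∀ j, 0 < q j) (hs : ∀ j, 0 < s j)
    (bv : Fin J → Fin d → ℤ)
    (f : Fin J → (Fin d → ℝ) → (Fin d → ℝ))
    (hf : ∀ j y i, f j y i = (∑ k, (A j i k : ℝ) * y k) / (q j : ℝ) +
      (bv j i : ℝ) / (s j : ℝ))
    (τ : ℝ) (hτ0 : 0 < τ) (hτ1 : τ < 1)
    (hcontr : ∀ j x y, ‖f j x - f j y‖ ≤ τ * ‖x - y‖)
    (C : Set (Fin d → ℝ)) (hCc : IsCompact C) (hCne : C.Nonempty)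
    (hattr : C = ⋃ j, f j '' C) :
    ∃ K : ℝ, 0 < K ∧ ∀ (p : Fin d → ℤ) (m : ℕ), 0 < m →
      (fun i => (p i : ℝ) / (m : ℝ)) ∈ C →
      ∃ (ω : ℕ → Fin J) (l P : ℕ), 1 ≤ P ∧ (∀ j, l ≤ j → ω (j + P) = ω j) ∧
        ((l : ℝ) + (P : ℝ)) ≤ K * (m : ℝ) ^ d ∧
        Filter.Tendsto (fun n => addrComp f ω n 0) Filter.atTop
          (nhds fun i => (p i : ℝ) / (m : ℝ)) := by
  classical
  -- bound on C
  obtain ⟨R, hRC⟩ : ∃ R : ℝ, ∀ x ∈ C, ‖x‖ ≤ R := hCc.isBounded.exists_norm_le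
  have hR0 : 0 ≤ R := le_trans (norm_nonneg _) (hRC _ hCne.choose_spec)
  set S : ℕ := ∏ j, s j with hSdef
  have hSpos : 0 < S := Finset.prod_pos (fun j _ => hs j)
  set N₀ : ℕ := ⌈R⌉₊ * S with hN₀def
  refine ⟨(((2 * N₀ + 1) ^ d : ℕ) : ℝ), by exact_mod_cast pow_pos (by omega) d, ?_⟩
  intro p m hm hmem
  have hm' : (m : ℝ) ≠ 0 := Nat.cast_ne_zero.mpr hm.ne'
  have hmS : (0 : ℝ) < (m : ℝ) * (S : ℝ) := by positivity
  set ξ₀ : Fin d → ℝ := fun i => (p i : ℝ) / (m : ℝ) with hξ₀def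
  set Dm : (Fin d → ℝ) → Prop :=
    fun x => ∀ i, ∃ r : ℤ, x i * ((m : ℝ) * (S : ℝ)) = r with hDmdef
  have hDm0 : Dm ξ₀ := by
    intro i
    refine ⟨p i * S, ?_⟩
    simp only [hξ₀def]
    push_cast
    field_simp
  -- preservation of denominators under inverse branches
  have pres : ∀ (j : Fin J) (x y : Fin d → ℝ), Dm x → f j y = x → Dm y := by
    intro j x y hx hfy k
    obtain ⟨t, ht⟩ : (s j : ℕ) ∣ S := Finset.dvd_prod_of_mem _ (Finset.mem_univ j)
    have htne : t ≠ 0 := by rintro rfl; rw [Nat.mul_zero] at ht; omega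
    have ht0 : (t : ℝ) ≠ 0 := Nat.cast_ne_zero.mpr htne
    set B : Matrix (Fin d) (Fin d) ℤ := (A j).det • (A j).adjugate with hBdef
    have hBA : B * A j = 1 := by
      rw [hBdef, Matrix.smul_mul, Matrix.adjugate_mul, smul_smul]
      rcases hdet j with h | h <;> rw [h] <;> norm_num
    set A' : Matrix (Fin d) (Fin d) ℝ := (A j).map (Int.cast) with hA'def
    set B' : Matrix (Fin d) (Fin d) ℝ := B.map (Int.cast) with hB'def
    have hBA' : B' * A' = 1 := by
      have h := Matrix.map_mul (L := B) (M := A j) (f := Int.castRingHom ℝ)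
      rw [hBA] at h
      have h1 : (1 : Matrix (Fin d) (Fin d) ℤ).map (⇑(Int.castRingHom ℝ)) = 1 :=
        Matrix.map_one _ (by simp) (by simp)
      rw [h1] at h
      rw [hB'def, hA'def]
      exact h.symm
    have hy : B'.mulVec (A'.mulVec y) = y := by
      rw [Matrix.mulVec_mulVec, hBA', Matrix.one_mulVec]
    have hsj : ((s j : ℕ) : ℝ) ≠ 0 := Nat.cast_ne_zero.mpr (hs j).ne'
    have hqj : ((q j : ℕ) : ℝ) ≠ 0 := Nat.cast_ne_zero.mpr (hq j).ne'
    have hAv : ∀ i, A'.mulVec y i = (q j : ℝ) * (x i - (bv j i : ℝ) / (s j : ℝ)) := by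
      intro i
      have hx' : x i = (∑ k, (A j i k : ℝ) * y k) / (q j : ℝ) + (bv j i : ℝ) / (s j : ℝ) := by
        rw [← hfy]; exact hf j y i
      have : A'.mulVec y i = ∑ k, (A j i k : ℝ) * y k := by
        simp [hA'def, Matrix.mulVec, dotProduct, Matrix.map_apply]
      rw [this, hx']
      field_simp
      ring
    have hyk : y k = ∑ i, (B k i : ℝ) * (A'.mulVec y i) := by
      conv_lhs => rw [← hy]
      simp [hB'def, Matrix.mulVec, dotProduct, Matrix.map_apply]
    choose r hr using hx
    have hScast : (S : ℝ) = (s j : ℝ) * (t : ℝ) := by exact_mod_cast ht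
    refine ⟨∑ i, B k i * (q j : ℤ) * (r i - bv j i * m * t), ?_⟩
    rw [hyk, Finset.sum_mul]
    push_cast
    apply Finset.sum_congr rfl
    intro i _
    have hxi : x i = (r i : ℝ) / ((m : ℝ) * (S : ℝ)) := by
      rw [← hr i]; field_simp
    rw [hAv i, hxi, hScast]
    field_simp
  -- every good point has a good preimage
  have hstep : ∀ x : Fin d → ℝ, x ∈ C ∧ Dm x →
      ∃ w : Fin J × (Fin d → ℝ), (w.2 ∈ C ∧ Dm w.2) ∧ f w.1 w.2 = x := by
    rintro x ⟨hxC, hxD⟩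
    rw [hattr] at hxC
    simp only [Set.mem_iUnion, Set.mem_image] at hxC
    obtain ⟨j, y, hyC, hyx⟩ := hxC
    exact ⟨(j, y), ⟨hyC, pres j x y hxD hyx⟩, hyx⟩
  set Good : (Fin d → ℝ) → Prop := fun x => x ∈ C ∧ Dm x with hGooddef
  have h0 : Good ξ₀ := ⟨hmem, hDm0⟩
  set T : {x // Good x} → Fin J × {x // Good x} :=
    fun z => ⟨(hstep z.1 z.2).choose.1,
      ⟨(hstep z.1 z.2).choose.2, (hstep z.1 z.2).choose_spec.1⟩⟩ with hTdef
  have hT : ∀ z : {x // Good x}, f (T z).1 ((T z).2 : Fin d → ℝ) = z :=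
    fun z => (hstep z.1 z.2).choose_spec.2
  set seq : ℕ → {x // Good x} :=
    fun n => Nat.rec (motive := fun _ => {x // Good x}) (⟨ξ₀, h0⟩ : {x // Good x})
      (fun _ z => (T z).2) n with hseqdef
  set ω : ℕ → Fin J := fun n => (T (seq n)).1 with hωdef
  set ξ : ℕ → (Fin d → ℝ) := fun n => (seq n : Fin d → ℝ) with hξdef
  have hseq : ∀ n, f (ω n) (ξ (n+1)) = ξ n := fun n => hT (seq n)
  have hξC : ∀ n, ξ n ∈ C := fun n => (seq n).2.1
  have hξD : ∀ n, Dm (ξ n) := fun n => (seq n).2.2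
  have hξ0 : ξ 0 = ξ₀ := rfl
  -- numerators
  choose r hr using hξD
  have hinj : ∀ n1 n2, r n1 = r n2 → ξ n1 = ξ n2 := by
    intro n1 n2 h
    funext i
    have h1 := hr n1 i
    have h2 := hr n2 i
    rw [h] at h1
    exact mul_right_cancel₀ hmS.ne' (h1.trans h2.symm)
  have hrbound : ∀ n i, r n i ∈ Finset.Icc (-((m * N₀ : ℕ) : ℤ)) ((m * N₀ : ℕ) : ℤ) := by
    intro n i
    have h1 : |ξ n i| ≤ R := by
      calc |ξ n i| = ‖ξ n i‖ := (Real.norm_eq_abs _).symm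
        _ ≤ ‖ξ n‖ := norm_le_pi_norm (ξ n) i
        _ ≤ R := hRC _ (hξC n)
    have h2 : |(r n i : ℝ)| ≤ (m : ℝ) * (N₀ : ℝ) := by
      rw [← hr n i, abs_mul, abs_of_pos hmS]
      calc |ξ n i| * ((m : ℝ) * (S : ℝ)) ≤ R * ((m : ℝ) * (S : ℝ)) := by
            apply mul_le_mul_of_nonneg_right h1 hmS.le
        _ ≤ (⌈R⌉₊ : ℝ) * ((m : ℝ) * (S : ℝ)) := by
            apply mul_le_mul_of_nonneg_right (Nat.le_ceil R) hmS.le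
        _ = (m : ℝ) * (N₀ : ℝ) := by rw [hN₀def]; push_cast; ring
    rw [Finset.mem_Icc]
    constructor
    · exact_mod_cast neg_le_of_abs_le (by exact_mod_cast h2)
    · exact_mod_cast le_of_abs_le (by exact_mod_cast h2)
  -- pigeonhole
  set N : ℕ := (2 * N₀ + 1) ^ d * m ^ d with hNdef
  have hcard : (Finset.Icc (fun _ => -((m * N₀ : ℕ) : ℤ) : Fin d → ℤ)
      (fun _ => ((m * N₀ : ℕ) : ℤ))).card < (Finset.range (N + 1)).card := by
    rw [Finset.card_range, Pi.card_Icc]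
    have h1 : ∀ i : Fin d, (Finset.Icc (-((m * N₀ : ℕ) : ℤ)) ((m * N₀ : ℕ) : ℤ)).card
        = 2 * (m * N₀) + 1 := by
      intro i
      rw [Int.card_Icc]
      omega
    rw [Finset.prod_congr rfl (fun i _ => h1 i), Finset.prod_const,
      Finset.card_univ, Fintype.card_fin]
    have h2 : 2 * (m * N₀) + 1 ≤ (2 * N₀ + 1) * m := by
      have e : (2 * N₀ + 1) * m = 2 * (m * N₀) + m := by ring
      rw [e]
      exact Nat.add_le_add_left hm _
    calc (2 * (m * N₀) + 1) ^ d ≤ ((2 * N₀ + 1) * m) ^ d :=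
          Nat.pow_le_pow_left h2 d
      _ = N := by rw [hNdef, mul_pow]
      _ < N + 1 := Nat.lt_succ_self N
  obtain ⟨a, ha, b, hb, hab, hrab⟩ :=
    Finset.exists_ne_map_eq_of_card_lt_of_maps_to hcard
      (fun n _ => Finset.mem_Icc.mpr
        ⟨fun i => (Finset.mem_Icc.mp (hrbound n i)).1,
         fun i => (Finset.mem_Icc.mp (hrbound n i)).2⟩)
  have key : ∃ n1 n2, n1 < n2 ∧ n2 ≤ N ∧ ξ n1 = ξ n2 := by
    rcases hab.lt_or_gt with h | h
    · exact ⟨a, b, h, by simpa using Nat.lt_succ_iff.mp (Finset.mem_range.mp hb),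
        hinj a b hrab⟩
    · exact ⟨b, a, h, by simpa using Nat.lt_succ_iff.mp (Finset.mem_range.mp ha),
        hinj b a hrab.symm⟩
  obtain ⟨l, n2, hlt, hn2, hcyc⟩ := key
  set P : ℕ := n2 - l with hPdef
  have hP : 1 ≤ P := by omega
  have hlP : l + P = n2 := by omega
  have hcycle : ξ (l + P) = ξ l := by rw [hlP]; exact hcyc.symm
  -- eventually periodic address
  set ω' : ℕ → Fin J := fun j => if j < l then ω j else ω (l + (j - l) % P) with hω'def
  set ξ' : ℕ → (Fin d → ℝ) := fun j => if j < l then ξ j else ξ (l + (j - l) % P)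
    with hξ'def
  have hper : ∀ j, l ≤ j → ω' (j + P) = ω' j := by
    intro j hj
    simp only [hω'def, if_neg (by omega : ¬ j + P < l), if_neg (by omega : ¬ j < l)]
    have h2 : (j + P - l) % P = (j - l) % P := by
      have h1 : j + P - l = (j - l) + P := by omega
      rw [h1, Nat.add_mod_right]
    rw [h2]
  have hξ'C : ∀ j, ξ' j ∈ C := by
    intro j
    simp only [hξ'def]
    split <;> exact hξC _
  have hstep' : ∀ j, f (ω' j) (ξ' (j+1)) = ξ' j := by
    intro j
    by_cases hjl : j < l
    · have hω : ω' j = ω j := if_pos hjl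
      have hξj : ξ' j = ξ j := if_pos hjl
      have hξj1 : ξ' (j+1) = ξ (j+1) := by
        by_cases h1 : j + 1 < l
        · exact if_pos h1
        · have h2 : j + 1 = l := by omega
          simp only [hξ'def, if_neg (by omega : ¬ j + 1 < l), h2, Nat.sub_self,
            Nat.zero_mod, Nat.add_zero, lt_self_iff_false, if_false]
      rw [hω, hξj, hξj1]
      exact hseq j
    · push_neg at hjl
      set a := (j - l) % P with hadef
      have haP : a < P := Nat.mod_lt _ (by omega)
      have hω : ω' j = ω (l + a) := if_neg (by omega)
      have hξj : ξ' j = ξ (l + a) := if_neg (by omega)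
      have hmod : (j + 1 - l) % P = (a + 1) % P := by
        have h1 : j + 1 - l = (j - l) + 1 := by omega
        rw [h1, hadef, Nat.mod_add_mod]
      have hξj1 : ξ' (j+1) = ξ (l + (a + 1) % P) := by
        simp only [hξ'def, if_neg (by omega : ¬ j + 1 < l), hmod]
      rw [hω, hξj, hξj1]
      by_cases hc : a + 1 = P
      · rw [hc, Nat.mod_self, Nat.add_zero]
        have h3 : ξ l = ξ (l + a + 1) := by
          rw [(by omega : l + a + 1 = l + P), hcycle]
        rw [h3]
        exact hseq (l + a)
      · rw [Nat.mod_eq_of_lt (by omega : a + 1 < P)]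
        exact hseq (l + a)
  have hξ'0 : ξ' 0 = ξ₀ := by
    simp only [hξ'def]
    split
    · exact hξ0
    · simp only [Nat.zero_sub, Nat.zero_mod, Nat.add_zero]
      have : l = 0 := by omega
      rw [this]
      exact hξ0
  have horbit : ∀ n, addrComp f ω' n (ξ' n) = ξ₀ := by
    intro n
    rw [addrComp_orbit f ω' ξ' hstep' n, hξ'0]
  -- convergence
  have hτnn : (0:ℝ) ≤ τ := hτ0.le
  have hbound : ∀ n, ‖addrComp f ω' n 0 - ξ₀‖ ≤ τ ^ n * R := by
    intro n
    calc ‖addrComp f ω' n 0 - ξ₀‖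
        = ‖addrComp f ω' n 0 - addrComp f ω' n (ξ' n)‖ := by rw [horbit n]
      _ ≤ τ ^ n * ‖(0 : Fin d → ℝ) - ξ' n‖ := addrComp_dist f τ hτnn hcontr ω' n _ _
      _ ≤ τ ^ n * R := by
          apply mul_le_mul_of_nonneg_left _ (pow_nonneg hτnn n)
          rw [zero_sub, norm_neg]
          exact hRC _ (hξ'C n)
  have htend : Filter.Tendsto (fun n => addrComp f ω' n 0) Filter.atTop (nhds ξ₀) := by
    rw [tendsto_iff_norm_sub_tendsto_zero]
    apply squeeze_zero (fun n => norm_nonneg _) hbound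
    have := (tendsto_pow_atTop_nhds_zero_of_lt_one hτnn hτ1).mul_const R
    simpa using this
  refine ⟨ω', l, P, hP, hper, ?_, htend⟩
  have h4 : ((l : ℝ) + (P : ℝ)) = ((l + P : ℕ) : ℝ) := by push_cast; ring
  rw [h4]
  have h5 : ((l + P : ℕ) : ℝ) ≤ (N : ℝ) := by exact_mod_cast (by omega : l + P ≤ N)
  calc ((l + P : ℕ) : ℝ) ≤ (N : ℝ) := h5
    _ = (((2 * N₀ + 1) ^ d : ℕ) : ℝ) * (m : ℝ) ^ d := by rw [hNdef]; push_cast; ring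
end

section
/- Let W ⊆ {0,1,…,b−1} with b ≥ 3 and 2 ≤ |W| < b, and Δ = log|W| / log b. Let c_0,…,c_{N−1} ∈ W and assume the infinite periodic word (c_0 c_1 ⋯ c_{N−1})^∞ has minimal period exactly N. Then gcd(c_0 b^{N−1} + c_1 b^{N−2} + ⋯ + c_{N−1}, b^N − 1) ≪ b^N / N^{1/Δ}, with implied constant depending only on b and W. -/
/-!
Let `g = gcd(S, b^N - 1)`. Multiplying by `b` rotates the digit string of `S` by one place modulo
`b^N - 1`, so `g` divides the values of all `N` cyclic rotations of the word; these are pairwise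
distinct because the period is minimal. If `b^k ≤ g < b^(k+1)`, two distinct multiples of `g`
cannot share their leading `N - k` digits, so the rotations have pairwise distinct prefixes of
length `N - k` over `W`. Hence `N ≤ |W|^(N-k)`, i.e. `N^(1/Δ) ≤ b^(N-k)`, and
`g < b^(k+1) ≤ b · b^N / N^(1/Δ)`.
-/

open Finset

def ofDigitsBE (b n : ℕ) (f : ℕ → ℕ) : ℕ := ∑ i ∈ range n, f i * b ^ (n - 1 - i)

theorem ofDigitsBE_add (b m n : ℕ) (f : ℕ → ℕ) :
    ofDigitsBE b (m + n) f = ofDigitsBE b m f * b ^ n + ofDigitsBE b n (fun i => f (m + i)) := by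
  unfold ofDigitsBE
  rw [sum_range_add, sum_mul]
  congr 1
  · refine sum_congr rfl fun i hi => ?_
    rw [mul_assoc, ← pow_add, show m + n - 1 - i = m - 1 - i + n by grind]
  · refine sum_congr rfl fun i _ => ?_
    rw [show m + n - 1 - (m + i) = n - 1 - i by omega]

theorem ofDigitsBE_succ (b n : ℕ) (f : ℕ → ℕ) :
    ofDigitsBE b (n + 1) f = ofDigitsBE b n f * b + f n := by
  rw [ofDigitsBE_add]
  simp [ofDigitsBE]

theorem ofDigitsBE_lt {b n : ℕ} {f : ℕ → ℕ} (hf : ∀ i < n, f i < b) :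
    ofDigitsBE b n f < b ^ n := by
  induction n with
  | zero => simp [ofDigitsBE]
  | succ n ih =>
    have hA := ih fun i hi => hf i (by omega)
    calc ofDigitsBE b (n + 1) f = ofDigitsBE b n f * b + f n := ofDigitsBE_succ b n f
      _ < (ofDigitsBE b n f + 1) * b := by
          rw [add_one_mul]; exact Nat.add_lt_add_left (hf n (by omega)) _
      _ ≤ b ^ (n + 1) := by rw [pow_succ]; exact Nat.mul_le_mul_right b hA

theorem ofDigitsBE_add_div_pow {b m n : ℕ} {f : ℕ → ℕ} (hf : ∀ i < n, f (m + i) < b) :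
    ofDigitsBE b (m + n) f / b ^ n = ofDigitsBE b m f := by
  have hpos : 0 < b ^ n := by
    rcases n with _ | n
    · simp
    · exact pow_pos ((Nat.zero_le _).trans_lt (hf 0 n.succ_pos)) _
  rw [ofDigitsBE_add, add_comm, Nat.add_mul_div_right _ _ hpos, Nat.div_eq_of_lt (ofDigitsBE_lt hf),
    zero_add]

theorem ofDigitsBE_inj {b n : ℕ} {f e : ℕ → ℕ} (hf : ∀ i < n, f i < b)
    (he : ∀ i < n, e i < b) (h : ofDigitsBE b n f = ofDigitsBE b n e) : ∀ i < n, f i = e i := by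
  induction n with
  | zero => simp
  | succ n ih =>
    rw [ofDigitsBE_succ, ofDigitsBE_succ] at h
    have hfn := hf n (by omega)
    have hen := he n (by omega)
    have hlast : f n = e n := by
      simpa [Nat.mul_add_mod_self_right, Nat.mod_eq_of_lt hfn, Nat.mod_eq_of_lt hen] using
        congrArg (· % b) h
    have hinit : ofDigitsBE b n f = ofDigitsBE b n e := by
      rw [hlast] at h
      exact Nat.eq_of_mul_eq_mul_right (by omega) (Nat.add_right_cancel h)
    intro i hi
    rcases Nat.lt_succ_iff_lt_or_eq.1 hi with hi | rfl
    · exact ih (fun i hi => hf i (by omega)) (fun i hi => he i (by omega)) hinit i hi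
    · exact hlast

theorem Nat.eq_of_dvd_of_div_eq {g m x y : ℕ} (hm : 0 < m) (hmg : m ≤ g) (hx : g ∣ x)
    (hy : g ∣ y) (h : x / m = y / m) : x = y := by
  refine Nat.ModEq.eq_of_abs_lt
    ((Nat.modEq_zero_iff_dvd.2 hx).trans (Nat.modEq_zero_iff_dvd.2 hy).symm) ?_
  have hx' := Nat.div_add_mod x m
  have hy' := Nat.div_add_mod y m
  have := Nat.mod_lt x hm
  have := Nat.mod_lt y hm
  rw [h] at hx'
  rw [abs_lt]
  constructor <;> omega

def cyclicShift (N : ℕ) (c : ℕ → ℕ) (j i : ℕ) : ℕ := c ((i + j) % N)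

theorem mul_ofDigitsBE_cyclicShift {b N : ℕ} (hb : 0 < b) (hN : 0 < N) (c : ℕ → ℕ) (j : ℕ) :
    b * ofDigitsBE b N (cyclicShift N c j) =
      ofDigitsBE b N (cyclicShift N c (j + 1)) + c (j % N) * (b ^ N - 1) := by
  obtain ⟨n, rfl⟩ : ∃ n, N = n + 1 := ⟨N - 1, by omega⟩
  have hfirst : ofDigitsBE b (n + 1) (cyclicShift (n + 1) c j) =
      c (j % (n + 1)) * b ^ n + ofDigitsBE b n (cyclicShift (n + 1) c (j + 1)) := by
    rw [add_comm n 1, ofDigitsBE_add, ← add_comm n 1]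
    simp only [ofDigitsBE, cyclicShift]
    simp [add_comm, add_left_comm]
  have hlast : ofDigitsBE b (n + 1) (cyclicShift (n + 1) c (j + 1)) =
      ofDigitsBE b n (cyclicShift (n + 1) c (j + 1)) * b + c (j % (n + 1)) := by
    rw [ofDigitsBE_succ, cyclicShift, show n + (j + 1) = j + (n + 1) by omega, Nat.add_mod_right]
  rw [hfirst, hlast]
  have := Nat.one_le_pow (n + 1) b hb
  zify [this]
  ring

theorem dvd_ofDigitsBE_cyclicShift {b N g : ℕ} (hb : 0 < b) (hN : 0 < N) {c : ℕ → ℕ}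
    (hS : g ∣ ofDigitsBE b N c) (hD : g ∣ b ^ N - 1) (j : ℕ) :
    g ∣ ofDigitsBE b N (cyclicShift N c j) := by
  induction j with
  | zero =>
    convert hS using 1
    exact sum_congr rfl fun i hi => by rw [cyclicShift, add_zero, Nat.mod_eq_of_lt (mem_range.1 hi)]
  | succ j ih =>
    rw [← Nat.dvd_add_left (dvd_mul_of_dvd_right hD _), ← mul_ofDigitsBE_cyclicShift hb hN]
    exact dvd_mul_of_dvd_right ih b

theorem cyclicShift_eq_of_ofDigitsBE_eq {b N : ℕ} {c : ℕ → ℕ} (hc : ∀ i < N, c i < b)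
    (hmin : ∀ P : ℕ, 0 < P → (∀ j : ℕ, c ((j + P) % N) = c (j % N)) → N ≤ P)
    {j₁ j₂ : ℕ} (hj₁ : j₁ < N) (hj₂ : j₂ < N)
    (h : ofDigitsBE b N (cyclicShift N c j₁) = ofDigitsBE b N (cyclicShift N c j₂)) :
    j₁ = j₂ := by
  wlog hle : j₁ ≤ j₂ generalizing j₁ j₂ with H
  · exact (H hj₂ hj₁ h.symm (by omega)).symm
  have hdigit : ∀ j, c (j % N) < b := fun j => hc _ (Nat.mod_lt _ (by omega))
  have hagree : ∀ i, c ((i + j₁) % N) = c ((i + j₂) % N) := by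
    intro i
    have := ofDigitsBE_inj (fun i _ => hdigit _) (fun i _ => hdigit _) h (i % N)
      (Nat.mod_lt _ (by omega))
    simpa only [cyclicShift, Nat.mod_add_mod] using this
  have hperiod : ∀ j, c ((j + (j₂ - j₁)) % N) = c (j % N) := by
    intro j
    have := hagree (j + (N - j₁))
    rwa [show j + (N - j₁) + j₁ = j + N by omega,
      show j + (N - j₁) + j₂ = j + (j₂ - j₁) + N by omega,
      Nat.add_mod_right, Nat.add_mod_right, eq_comm] at this
  by_contra hne
  have := hmin (j₂ - j₁) (by omega) hperiod
  omega

theorem le_card_pow_of_dvd_cyclicShift {b N g k : ℕ} {W : Finset ℕ} {c : ℕ → ℕ}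
    (hW : W ⊆ range b) (hc : ∀ i < N, c i ∈ W)
    (hmin : ∀ P : ℕ, 0 < P → (∀ j : ℕ, c ((j + P) % N) = c (j % N)) → N ≤ P)
    (hg : ∀ j, g ∣ ofDigitsBE b N (cyclicShift N c j)) (hkg : b ^ k ≤ g) (hkN : k ≤ N) :
    N ≤ W.card ^ (N - k) := by
  have hdigit : ∀ i < N, c i < b := fun i hi => mem_range.1 (hW (hc i hi))
  let window (j : Fin N) (i : Fin (N - k)) : W :=
    ⟨cyclicShift N c j i, hc _ (Nat.mod_lt _ j.pos)⟩
  have hinj : Function.Injective window := by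
    intro j₁ j₂ hj
    have hshift (j : Fin N) : ∀ i < k, cyclicShift N c j (N - k + i) < b :=
      fun _ _ => hdigit _ (Nat.mod_lt _ j.pos)
    have htop : ofDigitsBE b N (cyclicShift N c j₁) / b ^ k =
        ofDigitsBE b N (cyclicShift N c j₂) / b ^ k := by
      have htop₁ := ofDigitsBE_add_div_pow (hshift j₁)
      have htop₂ := ofDigitsBE_add_div_pow (hshift j₂)
      rw [Nat.sub_add_cancel hkN] at htop₁ htop₂
      rw [htop₁, htop₂]
      exact sum_congr rfl fun i hi => by
        rw [show cyclicShift N c j₁ i = cyclicShift N c j₂ i from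
          congrArg Subtype.val (congrFun hj ⟨i, mem_range.1 hi⟩)]
    have hb : 0 < b := (Nat.zero_le _).trans_lt (hdigit 0 j₁.pos)
    exact Fin.ext <| cyclicShift_eq_of_ofDigitsBE_eq hdigit hmin j₁.2 j₂.2 <|
      Nat.eq_of_dvd_of_div_eq (pow_pos hb k) hkg (hg j₁) (hg j₂) htop
  simpa using Fintype.card_le_of_injective window hinj

theorem Real.rpow_logb_le_pow {w b x : ℝ} {L : ℕ} (hw : 1 < w) (hb : 1 ≤ b) (hx : 0 ≤ x)
    (h : x ≤ w ^ L) : x ^ Real.logb w b ≤ b ^ L :=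
  calc x ^ Real.logb w b ≤ (w ^ L) ^ Real.logb w b :=
        Real.rpow_le_rpow hx h (Real.logb_nonneg hw hb)
    _ = (w ^ Real.logb w b) ^ L := by
        rw [← Real.rpow_natCast, ← Real.rpow_mul (by linarith), mul_comm,
          Real.rpow_mul (by linarith), Real.rpow_natCast]
    _ = b ^ L := by rw [Real.rpow_logb (by linarith) hw.ne' (by linarith)]

theorem stmt_13_general (b : ℕ) (hb : 3 ≤ b) (W : Finset ℕ)
    (hWsub : W ⊆ Finset.range b) (hW2 : 2 ≤ W.card)
    (Δ : ℝ) (hΔ : Δ = Real.log W.card / Real.log b) :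
    ∃ K : ℝ, 0 < K ∧ ∀ (N : ℕ) (c : ℕ → ℕ), 1 ≤ N →
      (∀ i, i < N → c i ∈ W) →
      (∀ P : ℕ, 0 < P → (∀ j : ℕ, c ((j + P) % N) = c (j % N)) → N ≤ P) →
      ((Nat.gcd (∑ i ∈ Finset.range N, c i * b ^ (N - 1 - i)) (b ^ N - 1) : ℕ) : ℝ) ≤
        K * (b : ℝ) ^ N / (N : ℝ) ^ (1 / Δ) := by
  refine ⟨b, by positivity, fun N c hN hc hmin => ?_⟩
  change ((Nat.gcd (ofDigitsBE b N c) (b ^ N - 1) : ℕ) : ℝ) ≤ _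
  set g := Nat.gcd (ofDigitsBE b N c) (b ^ N - 1)
  have hbN : 1 < b ^ N := Nat.one_lt_pow (by omega) (by omega)
  have hg_pos : 0 < g := Nat.gcd_pos_of_pos_right _ (by omega)
  have hg_lt : g < b ^ N := (Nat.le_of_dvd (by omega) (Nat.gcd_dvd_right _ _)).trans_lt (by omega)
  have hg_shift := dvd_ofDigitsBE_cyclicShift (b := b) (c := c) (by omega) hN
    (Nat.gcd_dvd_left _ _) (Nat.gcd_dvd_right _ _)
  set k := Nat.log b g
  have hkN : k < N := Nat.log_lt_of_lt_pow hg_pos.ne' hg_lt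
  have hcount := le_card_pow_of_dvd_cyclicShift hWsub hc hmin hg_shift
    (Nat.pow_log_le_self b hg_pos.ne') hkN.le
  have hN_rpow : (N : ℝ) ^ (1 / Δ) ≤ (b : ℝ) ^ (N - k) := by
    rw [hΔ, one_div_div, Real.log_div_log]
    exact Real.rpow_logb_le_pow (by exact_mod_cast hW2) (by exact_mod_cast (by omega : 1 ≤ b))
      N.cast_nonneg (by exact_mod_cast hcount)
  have hg_mul : g * b ^ (N - k) ≤ b * b ^ N := by
    calc g * b ^ (N - k) ≤ b ^ (k + 1) * b ^ (N - k) :=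
          Nat.mul_le_mul_right _ (Nat.lt_pow_succ_log_self (by omega) g).le
      _ = b * b ^ N := by rw [← pow_add, show k + 1 + (N - k) = N + 1 by omega, pow_succ']
  rw [le_div_iff₀ (Real.rpow_pos_of_pos (by exact_mod_cast hN) _)]
  calc (g : ℝ) * (N : ℝ) ^ (1 / Δ) ≤ g * (b : ℝ) ^ (N - k) := by gcongr
    _ ≤ b * (b : ℝ) ^ N := by exact_mod_cast hg_mul

/-- if `c_0 … c_{N-1} ∈ W` and the infinite word `(c_0 ⋯ c_{N-1})^∞`
has minimal period exactly `N`, then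
`gcd(c_0 b^{N-1} + ⋯ + c_{N-1}, b^N - 1) ≪_{b,W} b^N / N^{1/Δ}`. -/
theorem stmt_13 (b : ℕ) (hb : 3 ≤ b) (W : Finset ℕ)
    (hWsub : W ⊆ Finset.range b) (hW2 : 2 ≤ W.card) (hWne : W ≠ Finset.range b)
    (Δ : ℝ) (hΔ : Δ = Real.log W.card / Real.log b) :
    ∃ K : ℝ, 0 < K ∧ ∀ (N : ℕ) (c : ℕ → ℕ), 1 ≤ N →
      (∀ i, i < N → c i ∈ W) →
      (∀ P : ℕ, 0 < P → (∀ j : ℕ, c ((j + P) % N) = c (j % N)) → N ≤ P) →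
      ((Nat.gcd (∑ i ∈ Finset.range N, c i * b ^ (N - 1 - i)) (b ^ N - 1) : ℕ) : ℝ) ≤
        K * (b : ℝ) ^ N / (N : ℝ) ^ (1 / Δ) :=
  stmt_13_general b hb W hWsub hW2 Δ hΔ
end

section
/- Let b ≥ 3 and W ⊊ {0,1,…,b−1} with |W| ≥ 2, Δ = log|W|/log b. For any finite set S = {q_1,…,q_v} of primes none of which divides b, there are only finitely many rational numbers r/s ∈ C_{b,W} (in lowest terms) such that every prime factor of s lies in S. -/
open Finset

theorem padicValNat_le_of_dvd {p m n : ℕ} [Fact p.Prime] (hn : n ≠ 0) (h : m ∣ n) :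
    padicValNat p m ≤ padicValNat p n :=
  (padicValNat_dvd_iff_le hn).1 (pow_padicValNat_dvd.trans h)

theorem padicValNat_pow_sub_one_le_pow_mul_sub_one {p b : ℕ} [Fact p.Prime] (hb : 1 < b)
    (t : ℕ) {k : ℕ} (hk : k ≠ 0) :
    padicValNat p (b ^ t - 1) ≤ padicValNat p (b ^ (t * k) - 1) := by
  rcases eq_or_ne t 0 with rfl | ht
  · simp
  exact padicValNat_le_of_dvd (Nat.sub_ne_zero_of_lt (Nat.one_lt_pow (mul_ne_zero ht hk) hb))
    (Nat.pow_sub_one_dvd_pow_sub_one b (dvd_mul_right t k))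

/-- Lifting the exponent, applied to `(b ^ (q - 1)) ^ t - 1` (Fermat) for odd `q` and to the
even exponent `2 * t` for `q = 2`. -/
theorem exists_padicValNat_pow_sub_one_le {q b : ℕ} [hq : Fact q.Prime] (hb : 1 < b)
    (hqb : ¬ q ∣ b) : ∃ c, ∀ t ≠ 0, padicValNat q (b ^ t - 1) ≤ c + padicValNat q t := by
  rcases hq.out.eq_two_or_odd' with rfl | hodd
  · refine ⟨padicValNat 2 (b + 1) + padicValNat 2 (b - 1), fun t ht => ?_⟩
    have hlte := padicValNat.pow_two_sub_pow hb (by omega) hqb (mul_ne_zero ht two_ne_zero)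
      (even_two.mul_left t)
    rw [one_pow, padicValNat.mul ht two_ne_zero, padicValNat.self one_lt_two] at hlte
    have := padicValNat_pow_sub_one_le_pow_mul_sub_one (p := 2) hb t two_ne_zero
    omega
  · refine ⟨padicValNat q (b ^ (q - 1) - 1), fun t ht => ?_⟩
    have hfermat : q ∣ b ^ (q - 1) - 1 := by
      rw [← Nat.totient_prime hq.out, ← Nat.modEq_iff_dvd' (Nat.one_le_pow _ _ (by omega))]
      exact (Nat.ModEq.pow_totient (Nat.coprime_comm.1 (hq.out.coprime_iff_not_dvd.2 hqb))).symm
    have hlte := padicValNat.pow_sub_pow (p := q) (x := b ^ (q - 1)) (y := 1) hodd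
      (Nat.one_lt_pow (by have := hq.out.two_le; omega) hb) hfermat
      (fun h => hqb (hq.out.dvd_of_dvd_pow h)) ht
    rw [one_pow, ← pow_mul] at hlte
    have := padicValNat_pow_sub_one_le_pow_mul_sub_one (p := q) hb t
      (show q - 1 ≠ 0 by have := hq.out.two_le; omega)
    rw [mul_comm] at hlte
    omega

theorem exists_dvd_mul_of_dvd_pow_sub_one {b : ℕ} (hb : 1 < b) {S : Finset ℕ}
    (hSp : ∀ p ∈ S, p.Prime) (hSb : ∀ p ∈ S, ¬ p ∣ b) :
    ∃ A ≠ 0, ∀ s t : ℕ, t ≠ 0 → s.primeFactors ⊆ S → s ∣ b ^ t - 1 → s ∣ A * t := by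
  choose! c hc using fun q (hq : q ∈ S) =>
    have := Fact.mk (hSp q hq); exists_padicValNat_pow_sub_one_le hb (hSb q hq)
  have hA : ∏ q ∈ S, q ^ c q ≠ 0 := prod_ne_zero_iff.2 fun q hq => pow_ne_zero _ (hSp q hq).ne_zero
  refine ⟨_, hA, fun s t ht hsS hs => ?_⟩
  have hbt : b ^ t - 1 ≠ 0 := Nat.sub_ne_zero_of_lt (Nat.one_lt_pow ht hb)
  rw [← Nat.factorization_le_iff_dvd (ne_zero_of_dvd_ne_zero hbt hs) (mul_ne_zero hA ht)]
  intro q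
  by_cases hq : q ∈ S
  · have hqp := hSp q hq
    have := Fact.mk hqp
    have hcA : c q ≤ (∏ q ∈ S, q ^ c q).factorization q :=
      (hqp.pow_dvd_iff_le_factorization hA).1 (dvd_prod_of_mem _ hq)
    rw [Nat.factorization_mul hA ht, Finsupp.add_apply, Nat.factorization_def _ hqp,
      Nat.factorization_def t hqp]
    calc padicValNat q s ≤ padicValNat q (b ^ t - 1) := padicValNat_le_of_dvd hbt hs
      _ ≤ c q + padicValNat q t := hc q hq t ht
      _ ≤ _ := by gcongr
  · rw [Finsupp.notMem_support_iff.1 fun h => hq (hsS (Nat.support_factorization s ▸ h))]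
    exact Nat.zero_le _

theorem Rat.finite_setOf_mem_Icc_den_le (N : ℕ) :
    {r : ℚ | r ∈ Set.Icc 0 1 ∧ r.den ≤ N}.Finite := by
  refine (((Set.finite_Icc (0 : ℤ) N).prod (Set.finite_Icc 0 N)).image
    fun p => (p.1 : ℚ) / p.2).subset ?_
  rintro r ⟨⟨h0, h1⟩, hN⟩
  have hnum : (r.num : ℚ) ≤ N := by
    rw [← Rat.mul_den_eq_num]
    exact (mul_le_of_le_one_left (Nat.cast_nonneg _) h1).trans (by exact_mod_cast hN)
  exact ⟨(r.num, r.den), ⟨⟨Rat.num_nonneg.2 h0, by exact_mod_cast hnum⟩, r.den.zero_le, hN⟩,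
    Rat.num_div_den r⟩

theorem finite_setOf_pow_le_mul_pow {a b : ℕ} (hab : a < b) (C : ℕ) :
    {n : ℕ | b ^ n ≤ C * a ^ n}.Finite := by
  have hb : (0 : ℝ) < b := by exact_mod_cast (Nat.zero_le a).trans_lt hab
  have hlim : Filter.Tendsto (fun n : ℕ => (C : ℝ) * ((a : ℝ) / b) ^ n) Filter.atTop (nhds 0) := by
    simpa using (tendsto_pow_atTop_nhds_zero_of_lt_one (by positivity)
      ((div_lt_one hb).2 (by exact_mod_cast hab))).const_mul (C : ℝ)
  have hev := hlim.eventually_lt_const zero_lt_one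
  rw [← Nat.cofinite_eq_atTop, Filter.eventually_cofinite] at hev
  refine hev.subset fun n hn hlt => ?_
  rw [div_pow, mul_div_assoc', div_lt_one (by positivity)] at hlt
  exact (not_le.2 hlt) (by exact_mod_cast hn)

theorem dvd_pow_orderOf_sub_one {b : ℕ} (hb : 0 < b) (s : ℕ) :
    s ∣ b ^ orderOf (b : ZMod s) - 1 := by
  rw [← Nat.modEq_iff_dvd' (Nat.one_le_pow _ _ hb), ← ZMod.natCast_eq_natCast_iff]
  push_cast
  exact (pow_orderOf_eq_one _).symm

theorem exists_ofDigits_of_mem_missingDigitSet {b : ℕ} {W : Finset ℕ} (hW : W ⊆ range b)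
    {x : ℝ} (hx : x ∈ missingDigitSet b W) :
    ∃ d : ℕ → Fin b, (∀ j, (d j : ℕ) ∈ W) ∧ x = Real.ofDigits d := by
  obtain ⟨w, hw, rfl⟩ := hx
  exact ⟨fun j => ⟨w j, mem_range.1 (hW (hw j))⟩, hw, tsum_congr fun j => div_eq_mul_inv _ _⟩

theorem Real.exists_pow_mul_ofDigits_eq_add {b : ℕ} (d : ℕ → Fin b) (n : ℕ) :
    ∃ m : ℕ, (b : ℝ) ^ n * Real.ofDigits d = m + Real.ofDigits (fun i => d (i + n)) := by
  induction n with
  | zero => exact ⟨0, by simp⟩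
  | succ n ih =>
    obtain ⟨m, hm⟩ := ih
    have hb : (b : ℝ) ≠ 0 := Nat.cast_ne_zero.2 (Fin.pos (d 0)).ne'
    refine ⟨b * m + d n, ?_⟩
    have hshift : (fun i => d (i + 1 + n)) = fun i => d (i + (n + 1)) :=
      funext fun i => congrArg d (by omega)
    rw [pow_succ', mul_assoc, hm, Real.ofDigits_eq_sum_add_ofDigits _ 1]
    simp only [range_one, sum_singleton, Real.ofDigitsTerm, zero_add, pow_one, hshift]
    push_cast
    field_simp
    ring

theorem exists_intCast_eq_den_mul_ofDigits {b : ℕ} {d : ℕ → Fin b} {r : ℚ}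
    (hr : (r : ℝ) = Real.ofDigits d) (j : ℕ) :
    ∃ a : ℤ, (a : ℝ) = r.den * Real.ofDigits (fun i => d (i + j)) ∧
      (a : ZMod r.den) = b ^ j * r.num := by
  obtain ⟨m, hm⟩ := Real.exists_pow_mul_ofDigits_eq_add d j
  refine ⟨b ^ j * r.num - m * r.den, ?_, by simp⟩
  rw [← hr, Rat.cast_def] at hm
  have hden : (r.den : ℝ) ≠ 0 := by positivity
  push_cast
  rw [eq_sub_of_add_eq' hm.symm]
  field_simp

theorem orderOf_le_card_pow_of_ofDigits {b : ℕ} {W : Finset ℕ} {d : ℕ → Fin b}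
    (hd : ∀ j, (d j : ℕ) ∈ W) {r : ℚ} (hr : (r : ℝ) = Real.ofDigits d) {n : ℕ}
    (hn : r.den < b ^ n) : orderOf (b : ZMod r.den) ≤ W.card ^ n := by
  set t := orderOf (b : ZMod r.den)
  have hnum : IsUnit (r.num : ZMod r.den) := by
    rw [ZMod.coe_int_isUnit_iff_isCoprime, Int.isCoprime_iff_gcd_eq_one, Int.gcd_comm]
    exact r.reduced
  -- `r.den` times the tail after `j` digits is an integer `≡ b ^ j * r.num`, and tails sharing
  -- their first `n` digits differ by less than `1 / r.den`.
  have hinj : Set.InjOn (fun j (k : Fin n) => (d (k + j) : ℕ)) (range t) := by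
    intro i hi j hj hij
    obtain ⟨a, haR, haZ⟩ := exists_intCast_eq_den_mul_ofDigits hr i
    obtain ⟨a', ha'R, ha'Z⟩ := exists_intCast_eq_den_mul_ofDigits hr j
    have hclose : |((a - a' : ℤ) : ℝ)| < 1 := by
      have hdig := Real.abs_ofDigits_sub_ofDigits_le (n := n) (x := fun k => d (k + i))
        (y := fun k => d (k + j)) fun k hk => Fin.ext (congrFun hij ⟨k, hk⟩)
      rw [Int.cast_sub, haR, ha'R, ← mul_sub, abs_mul, Nat.abs_cast]
      calc (r.den : ℝ) * _ ≤ r.den * ((b : ℝ) ^ n)⁻¹ := by gcongr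
        _ < 1 := by
          rw [← div_eq_mul_inv, div_lt_one (by exact_mod_cast r.den.zero_le.trans_lt hn)]
          exact_mod_cast hn
    have haa' : a = a' := sub_eq_zero.1 (Int.abs_lt_one_iff.1 (by exact_mod_cast hclose))
    have hpow : (b : ZMod r.den) ^ i = b ^ j :=
      hnum.mul_right_cancel (by rw [← haZ, ← ha'Z, haa'])
    exact pow_injOn_Iio_orderOf (mem_range.1 hi) (mem_range.1 hj) hpow
  calc t = #(range t) := (card_range t).symm
    _ ≤ #(Fintype.piFinset fun _ : Fin n => W) :=
      card_le_card_of_injOn _ (fun j _ => Fintype.mem_piFinset.2 fun k => hd _) hinj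
    _ = #W ^ n := by simp

theorem exists_den_lt_of_ofDigits {b : ℕ} (hb : 1 < b) {W : Finset ℕ} (hW : #W < b)
    {S : Finset ℕ} (hSp : ∀ p ∈ S, p.Prime) (hSb : ∀ p ∈ S, ¬ p ∣ b) :
    ∃ B, ∀ d : ℕ → Fin b, (∀ j, (d j : ℕ) ∈ W) → ∀ r : ℚ, (r : ℝ) = Real.ofDigits d →
      r.den.primeFactors ⊆ S → r.den < B := by
  obtain ⟨A, hA, hAdvd⟩ := exists_dvd_mul_of_dvd_pow_sub_one hb hSp hSb
  obtain ⟨N, hN⟩ :=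
    (finite_setOf_pow_le_mul_pow (Nat.sub_one_lt_of_lt hb) (A * (b - 1))).bddAbove
  refine ⟨b ^ (N + 1), fun d hd r hr hS => ?_⟩
  set s := r.den
  set t := orderOf (b : ZMod s)
  have hcop : b.Coprime s := Nat.Coprime.symm <| Nat.coprime_of_dvd fun p hp hps =>
    hSb p (hS (Nat.mem_primeFactors.2 ⟨hp, hps, r.den_nz⟩))
  have ht : t ≠ 0 := ((ZMod.isUnit_iff_coprime b s).2 hcop).isOfFinOrder.orderOf_pos.ne'
  have hsA : s ≤ A * t := Nat.le_of_dvd (Nat.pos_of_ne_zero (mul_ne_zero hA ht))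
    (hAdvd s t ht hS (dvd_pow_orderOf_sub_one (by omega) s))
  have htW : t ≤ #W ^ (Nat.log b s + 1) :=
    orderOf_le_card_pow_of_ofDigits hd hr (Nat.lt_pow_succ_log_self hb s)
  have hlog : Nat.log b s ≤ N := hN <| calc
    b ^ Nat.log b s ≤ s := Nat.pow_log_le_self b r.den_nz
    _ ≤ A * (b - 1) ^ (Nat.log b s + 1) :=
      hsA.trans (Nat.mul_le_mul_left A (htW.trans (Nat.pow_le_pow_left (by omega) _)))
    _ = A * (b - 1) * (b - 1) ^ Nat.log b s := by rw [pow_succ']; ring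
  calc s < b ^ (Nat.log b s + 1) := Nat.lt_pow_succ_log_self hb s
    _ ≤ b ^ (N + 1) := Nat.pow_le_pow_right (by omega) (by omega)

theorem stmt_14_general (b : ℕ) (hb : 3 ≤ b) (W : Finset ℕ)
    (hWsub : W ⊆ Finset.range b) (hWne : W ≠ Finset.range b)
    (S : Finset ℕ) (hSp : ∀ p ∈ S, Nat.Prime p) (hSb : ∀ p ∈ S, ¬ p ∣ b) :
    {r : ℚ | (r : ℝ) ∈ missingDigitSet b W ∧
      ∀ p : ℕ, Nat.Prime p → p ∣ r.den → p ∈ S}.Finite := by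
  have hW : #W < b := by simpa using card_lt_card (hWsub.ssubset_of_ne hWne)
  obtain ⟨B, hB⟩ := exists_den_lt_of_ofDigits (by omega) hW hSp hSb
  refine (Rat.finite_setOf_mem_Icc_den_le B).subset ?_
  rintro r ⟨hr, hS⟩
  obtain ⟨d, hd, hrd⟩ := exists_ofDigits_of_mem_missingDigitSet hWsub hr
  have hS' : r.den.primeFactors ⊆ S := fun p hp =>
    hS p (Nat.prime_of_mem_primeFactors hp) (Nat.dvd_of_mem_primeFactors hp)
  refine ⟨⟨?_, ?_⟩, (hB d hd r hrd hS').le⟩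
  · exact_mod_cast hrd ▸ Real.ofDigits_nonneg d
  · exact_mod_cast hrd ▸ Real.ofDigits_le_one d

/-- for any finite set `S` of primes none of which divides `b`, only
finitely many rationals `r/s ∈ C_{b,W}` (in lowest terms) have all prime factors of
`s` in `S`. -/
theorem stmt_14 (b : ℕ) (hb : 3 ≤ b) (W : Finset ℕ)
    (hWsub : W ⊆ Finset.range b) (hW2 : 2 ≤ W.card) (hWne : W ≠ Finset.range b)
    (S : Finset ℕ) (hSp : ∀ p ∈ S, Nat.Prime p) (hSb : ∀ p ∈ S, ¬ p ∣ b) :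
    {r : ℚ | (r : ℝ) ∈ missingDigitSet b W ∧
      ∀ p : ℕ, Nat.Prime p → p ∣ r.den → p ∈ S}.Finite :=
  stmt_14_general b hb W hWsub hWne S hSp hSb
end

section
/- Let b ≥ 3 and W ⊊ {0,1,…,b−1} with |W| ≥ 2. Then C_{b,W} contains at most finitely many rational numbers p/q (in lowest terms) where q is a safe prime, i.e. both q and (q−1)/2 are prime. -/
theorem ZMod.sq_eq_one_of_orderOf_lt_half {q : ℕ} (hq : q.Prime) (hp : ((q - 1) / 2).Prime)
    {x : ZMod q} (hx : x ≠ 0) (h : orderOf x < (q - 1) / 2) : x ^ 2 = 1 := by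
  have := Fact.mk hq
  have hq_odd : q % 2 = 1 := by
    rcases hq.eq_two_or_odd with rfl | hodd
    · exact absurd hp (by decide)
    · exact hodd
  have hdvd : orderOf x ∣ 2 * ((q - 1) / 2) := by
    rw [show 2 * ((q - 1) / 2) = q - 1 by omega]
    exact ZMod.orderOf_dvd_card_sub_one hx
  have hpos : 0 < orderOf x := Nat.pos_of_dvd_of_pos hdvd (by have := hp.pos; omega)
  have hcop : (orderOf x).Coprime ((q - 1) / 2) :=
    (hp.coprime_iff_not_dvd.2 fun h' => (Nat.le_of_dvd hpos h').not_gt h).symm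
  exact orderOf_dvd_iff_pow_eq_one.1 (hcop.dvd_of_dvd_mul_right hdvd)

theorem Nat.lt_sq_of_natCast_sq_eq_one {b q : ℕ} (hb : 2 ≤ b) (h : (b : ZMod q) ^ 2 = 1) :
    q < b ^ 2 := by
  have hb2 : 1 < b ^ 2 := Nat.one_lt_pow two_ne_zero hb
  have hdvd : q ∣ b ^ 2 - 1 := by
    rw [← ZMod.natCast_eq_zero_iff, Nat.cast_sub hb2.le]
    push_cast
    rw [h, sub_self]
  have := Nat.le_of_dvd (by omega) hdvd
  omega

theorem Nat.eventually_mul_pow_lt_pow (c : ℕ) {a b : ℕ} (h : a < b) :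
    ∀ᶠ n in Filter.atTop, c * a ^ n < b ^ n := by
  have hb : (0 : ℝ) < b := by exact_mod_cast (Nat.zero_le a).trans_lt h
  have hlim : Filter.Tendsto (fun n => (c : ℝ) * ((a : ℝ) / b) ^ n) Filter.atTop (nhds 0) := by
    simpa using (tendsto_pow_atTop_nhds_zero_of_lt_one (by positivity)
      ((div_lt_one hb).2 (by exact_mod_cast h))).const_mul (c : ℝ)
  filter_upwards [hlim.eventually_lt_const one_pos] with n hn
  rw [div_pow, ← mul_div_assoc, div_lt_one (by positivity)] at hn
  exact_mod_cast hn

theorem Rat.finite_setOf_den_le_of_mem_Icc (M : ℕ) :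
    {r : ℚ | r.den ≤ M ∧ r ∈ Set.Icc 0 1}.Finite := by
  refine ((Set.finite_Icc (0 : ℤ) M).image2 (fun (p : ℤ) (q : ℕ) => (p : ℚ) / q)
    (Set.finite_Icc 0 M)).subset ?_
  rintro r ⟨hden, h0, h1⟩
  refine ⟨r.num, ⟨Rat.num_nonneg.2 h0, ?_⟩, r.den, ⟨Nat.zero_le _, hden⟩, Rat.num_div_den r⟩
  exact (Rat.num_le_denom_iff.2 h1).trans (by exact_mod_cast hden)

open Finset

section MissingDigitSet

variable {b : ℕ} {W : Finset ℕ}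

theorem mem_missingDigitSet_iff_ofDigits (hW : W ⊆ range b) {x : ℝ} :
    x ∈ missingDigitSet b W ↔ ∃ d : ℕ → Fin b, (∀ j, (d j : ℕ) ∈ W) ∧ Real.ofDigits d = x := by
  constructor
  · rintro ⟨w, hw, rfl⟩
    exact ⟨fun j => ⟨w j, mem_range.1 (hW (hw j))⟩, hw, by
      simp [Real.ofDigits, Real.ofDigitsTerm, div_eq_mul_inv]⟩
  · rintro ⟨d, hd, rfl⟩
    exact ⟨fun j => d j, hd, by simp [Real.ofDigits, Real.ofDigitsTerm, div_eq_mul_inv]⟩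

theorem missingDigitSet_subset_Icc (hW : W ⊆ range b) : missingDigitSet b W ⊆ Set.Icc 0 1 := by
  intro x hx
  obtain ⟨d, -, rfl⟩ := (mem_missingDigitSet_iff_ofDigits hW).1 hx
  exact ⟨Real.ofDigits_nonneg d, Real.ofDigits_le_one d⟩

theorem exists_mul_sub_mem_missingDigitSet (hW : W ⊆ range b) {x : ℝ}
    (hx : x ∈ missingDigitSet b W) : ∃ c : ℕ, b * x - c ∈ missingDigitSet b W := by
  obtain ⟨d, hd, rfl⟩ := (mem_missingDigitSet_iff_ofDigits hW).1 hx
  refine ⟨d 0, (mem_missingDigitSet_iff_ofDigits hW).2 ⟨fun i => d (i + 1), fun i => hd _, ?_⟩⟩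
  have hb : (b : ℝ) ≠ 0 := by have := (d 0).pos; positivity
  rw [Real.ofDigits_eq_sum_add_ofDigits d 1]
  simp only [range_one, Real.ofDigitsTerm, sum_singleton, zero_add, pow_one]
  field_simp
  ring

theorem exists_pow_mul_sub_mem_missingDigitSet (hW : W ⊆ range b) {x : ℝ}
    (hx : x ∈ missingDigitSet b W) (k : ℕ) :
    ∃ m : ℤ, (b : ℝ) ^ k * x - m ∈ missingDigitSet b W := by
  induction k with
  | zero => exact ⟨0, by simpa using hx⟩
  | succ k ih =>
    obtain ⟨m, hm⟩ := ih
    obtain ⟨c, hc⟩ := exists_mul_sub_mem_missingDigitSet hW hm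
    exact ⟨b * m + c, by convert hc using 1; push_cast; ring⟩

theorem card_le_pow_of_subset_missingDigitSet (hW : W ⊆ range b) {S : Finset ℝ}
    (hS : ↑S ⊆ missingDigitSet b W) {n : ℕ}
    (hsep : (S : Set ℝ).Pairwise fun x y => ((b : ℝ) ^ n)⁻¹ < |x - y|) :
    S.card ≤ W.card ^ n := by
  have hdig (x : S) : ∃ d : ℕ → Fin b, (∀ j, (d j : ℕ) ∈ W) ∧ Real.ofDigits d = x :=
    (mem_missingDigitSet_iff_ofDigits hW).1 (hS x.2)
  choose D hDW hD using hdig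
  calc S.card = Fintype.card S := (Fintype.card_coe S).symm
    _ ≤ Fintype.card (Fin n → W) := by
        refine Fintype.card_le_of_injective (fun x i => ⟨D x i, hDW x i⟩) fun x y hxy => ?_
        by_contra hne
        refine (hsep x.2 y.2 (Subtype.coe_ne_coe.2 hne)).not_ge ?_
        rw [← hD x, ← hD y]
        exact Real.abs_ofDigits_sub_ofDigits_le fun i hi =>
          Fin.ext (congrArg Subtype.val (congrFun hxy ⟨i, hi⟩))
    _ = W.card ^ n := by simp

/- The points `b ^ k * r` mod 1, `k < ord`, are distinct fractions `a / q` in the set; being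
`1 / q`-separated, there are at most `|W| ^ n` of them. -/
theorem orderOf_le_card_pow_of_mem_missingDigitSet (hW : W ⊆ range b) {r : ℚ}
    (hr : (r : ℝ) ∈ missingDigitSet b W) {n : ℕ} (hn : r.den < b ^ n) :
    orderOf (b : ZMod r.den) ≤ W.card ^ n := by
  set q := r.den
  set d := orderOf (b : ZMod q)
  choose m hm using exists_pow_mul_sub_mem_missingDigitSet hW hr
  set a : ℕ → ℤ := fun k => r.num * b ^ k - m k * q
  have hq : (0 : ℝ) < q := by exact_mod_cast r.pos
  have ha (k : ℕ) : (b : ℝ) ^ k * r - m k = a k / q := by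
    rw [Rat.cast_def]
    field_simp
    push_cast [a]
    ring
  have ha_inj : Set.InjOn a (Set.Iio d) := by
    intro k hk l hl hkl
    have hnum : IsUnit (r.num : ZMod q) :=
      (ZMod.coe_int_isUnit_iff_isCoprime _ _).2 (Rat.isCoprime_num_den r).symm
    apply pow_injOn_Iio_orderOf hk hl
    simpa [a, hnum.mul_right_inj] using congrArg (fun z : ℤ => (z : ZMod q)) hkl
  have hdiv_inj : Set.InjOn (fun k => (a k : ℝ) / q) (Set.Iio d) := fun k hk l hl h =>
    ha_inj hk hl (by simpa [hq.ne'] using h)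
  calc d = ((range d).image fun k => (a k : ℝ) / q).card := by
        rw [card_image_of_injOn (by simpa using hdiv_inj), card_range]
    _ ≤ W.card ^ n := by
        refine card_le_pow_of_subset_missingDigitSet hW ?_ ?_
        · intro x hx
          simp only [coe_image, coe_range, Set.mem_image] at hx
          obtain ⟨k, -, rfl⟩ := hx
          exact ha k ▸ hm k
        · simp only [coe_image, coe_range]
          rintro _ ⟨k, -, rfl⟩ _ ⟨l, -, rfl⟩ hne
          dsimp only at hne ⊢
          have hkl : (1 : ℝ) ≤ |(a k : ℝ) - a l| := by
            exact_mod_cast Int.one_le_abs (sub_ne_zero.2 fun h => hne (by simp only [h]))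
          calc ((b : ℝ) ^ n)⁻¹ < (q : ℝ)⁻¹ := inv_strictAnti₀ hq (by exact_mod_cast hn)
            _ ≤ |(a k : ℝ) - a l| / q := by rw [inv_eq_one_div]; gcongr
            _ = |(a k : ℝ) / q - a l / q| := by rw [← sub_div, abs_div, abs_of_pos hq]

theorem exists_orderOf_lt_half_den_of_mem_missingDigitSet (hb : 2 ≤ b) (hW : W ⊆ range b)
    (hWne : W ≠ range b) :
    ∃ N, ∀ r : ℚ, (r : ℝ) ∈ missingDigitSet b W → N ≤ r.den →
      orderOf (b : ZMod r.den) < (r.den - 1) / 2 := by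
  have hcard : W.card ≤ b - 1 := by
    have := card_lt_card (Finset.ssubset_iff_subset_ne.2 ⟨hW, hWne⟩)
    rw [card_range] at this
    omega
  -- with `n = log_b q`: `2 * ord + 3 ≤ 5 * (b - 1) ^ (n + 1) < b ^ n ≤ q` for large `n`
  obtain ⟨N, hN⟩ := Filter.eventually_atTop.1
    (Nat.eventually_mul_pow_lt_pow (5 * (b - 1)) (show b - 1 < b by omega))
  refine ⟨b ^ N, fun r hr hrN => ?_⟩
  set n := Nat.log b r.den
  have h1 : orderOf (b : ZMod r.den) ≤ W.card ^ (n + 1) :=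
    orderOf_le_card_pow_of_mem_missingDigitSet hW hr (Nat.lt_pow_succ_log_self hb r.den)
  have h2 : W.card ^ (n + 1) ≤ (b - 1) ^ (n + 1) := Nat.pow_le_pow_left hcard _
  have h3 : 5 * (b - 1) ^ (n + 1) < b ^ n := by
    rw [pow_succ]
    linarith [hN n (Nat.le_log_of_pow_le hb hrN)]
  have h4 : b ^ n ≤ r.den := Nat.pow_log_le_self b r.den_nz
  have h5 : 1 ≤ (b - 1) ^ (n + 1) := Nat.one_le_pow _ _ (by omega)
  omega

end MissingDigitSet

theorem stmt_15_general (b : ℕ) (hb : 3 ≤ b) (W : Finset ℕ)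
    (hWsub : W ⊆ Finset.range b) (hWne : W ≠ Finset.range b) :
    {r : ℚ | (r : ℝ) ∈ missingDigitSet b W ∧
      Nat.Prime r.den ∧ Nat.Prime ((r.den - 1) / 2)}.Finite := by
  obtain ⟨N, hN⟩ := exists_orderOf_lt_half_den_of_mem_missingDigitSet (by omega) hWsub hWne
  refine (Rat.finite_setOf_den_le_of_mem_Icc (max N (b ^ 2))).subset ?_
  rintro r ⟨hrC, hq, hp⟩
  have hr01 := missingDigitSet_subset_Icc hWsub hrC
  refine ⟨?_, by exact_mod_cast hr01.1, by exact_mod_cast hr01.2⟩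
  by_contra! hlarge
  obtain ⟨hqN, hqb⟩ := max_lt_iff.1 hlarge
  have hb0 : (b : ZMod r.den) ≠ 0 := by
    rw [Ne, ZMod.natCast_eq_zero_iff]
    exact fun h => (Nat.le_of_dvd (by omega) h).not_gt (by nlinarith)
  have hsq := ZMod.sq_eq_one_of_orderOf_lt_half hq hp hb0 (hN r hrC hqN.le)
  exact (Nat.lt_sq_of_natCast_sq_eq_one (by omega) hsq).not_gt hqb

/-- `C_{b,W}` contains only finitely many rationals `p/q` in lowest
terms whose denominator `q` is a safe prime (both `q` and `(q-1)/2` prime). -/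
theorem stmt_15 (b : ℕ) (hb : 3 ≤ b) (W : Finset ℕ)
    (hWsub : W ⊆ Finset.range b) (hW2 : 2 ≤ W.card) (hWne : W ≠ Finset.range b) :
    {r : ℚ | (r : ℝ) ∈ missingDigitSet b W ∧
      Nat.Prime r.den ∧ Nat.Prime ((r.den - 1) / 2)}.Finite :=
  stmt_15_general b hb W hWsub hWne
end

section
/- Let S ⊆ ℝ and ξ ∈ S irrational. With λ_int(ξ) the intrinsic ordinary exponent and \hat{λ}_ext(ξ) the extrinsic uniform exponent of rational approximation of ξ relative to S, we have \hat{λ}_ext(ξ) ≤ 1/λ_int(ξ) (with the conventions sup ∅ = 0 and 1/0 = ∞). -/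
/-- Exponents `l` such that `|ξ - p/q| ≤ q⁻¹ Q^{-l}` has a solution `p/q ∈ T` with
`1 ≤ q ≤ Q` for arbitrarily large `Q`. -/
def ordApproxSet (T : Set ℚ) (ξ : ℝ) : Set ℝ :=
  {l | ∀ Q₀ : ℝ, ∃ Q : ℝ, Q₀ ≤ Q ∧ ∃ r ∈ T, (r.den : ℝ) ≤ Q ∧
    |ξ - (r : ℝ)| ≤ ((r.den : ℝ))⁻¹ * Q ^ (-l)}

/-- Exponents `l` such that `|ξ - p/q| ≤ q⁻¹ Q^{-l}` has a solution `p/q ∈ T` with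
`1 ≤ q ≤ Q` for all sufficiently large `Q`. -/
def unifApproxSet (T : Set ℚ) (ξ : ℝ) : Set ℝ :=
  {l | ∃ Q₀ : ℝ, ∀ Q : ℝ, Q₀ ≤ Q → ∃ r ∈ T, (r.den : ℝ) ≤ Q ∧
    |ξ - (r : ℝ)| ≤ ((r.den : ℝ))⁻¹ * Q ^ (-l)}

/-- The ordinary exponent of approximation restricted to `T` (convention `sup ∅ = 0`). -/
noncomputable def ordExp (T : Set ℚ) (ξ : ℝ) : EReal :=
  sSup (insert (0 : EReal) (Real.toEReal '' ordApproxSet T ξ))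

/-- The uniform exponent of approximation restricted to `T` (convention `sup ∅ = 0`). -/
noncomputable def unifExp (T : Set ℚ) (ξ : ℝ) : EReal :=
  sSup (insert (0 : EReal) (Real.toEReal '' unifApproxSet T ξ))

open Filter in
lemma key_mul_le_one {S : Set ℝ} {ξ : ℝ} {l μ : ℝ} (hl0 : 0 < l) (hμ0 : 0 < μ)
    (hl : l ∈ ordApproxSet {r : ℚ | (r : ℝ) ∈ S} ξ)
    (hμ : μ ∈ unifApproxSet {r : ℚ | (r : ℝ) ∉ S} ξ) : μ * l ≤ 1 := by
  by_contra hcon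
  push_neg at hcon
  obtain ⟨Q₀, hQ₀⟩ := hμ
  set c : ℝ := (l + μ⁻¹) / 2 with hc
  have hinvl : μ⁻¹ < l := by
    rw [inv_lt_iff_one_lt_mul₀ hμ0]; linarith [mul_comm μ l]
  have hc1 : μ⁻¹ < c := by rw [hc]; linarith
  have hc2 : c < l := by rw [hc]; linarith
  have hc0 : 0 < c := lt_trans (inv_pos.2 hμ0) hc1
  have h1cμ : 1 < c * μ := by
    have h := (inv_lt_iff_one_lt_mul₀ hμ0).1 hc1
    linarith [mul_comm μ c]
  have t1 : Tendsto (fun Q : ℝ => Q ^ (c - l)) atTop (nhds 0) := by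
    simpa using tendsto_rpow_neg_atTop (show (0:ℝ) < l - c by linarith)
  have t2 : Tendsto (fun Q : ℝ => Q ^ (1 - c * μ)) atTop (nhds 0) := by
    simpa using tendsto_rpow_neg_atTop (show (0:ℝ) < c * μ - 1 by linarith)
  have t3 : Tendsto (fun Q : ℝ => Q ^ c) atTop atTop := tendsto_rpow_atTop hc0
  have hev : ∀ᶠ Q : ℝ in atTop, Q ^ (c - l) < 1/2 ∧ Q ^ (1 - c * μ) < 1/2 ∧
      Q₀ ≤ Q ^ c ∧ 1 ≤ Q :=
    (t1.eventually_lt_const (by norm_num)).and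
      ((t2.eventually_lt_const (by norm_num)).and
        ((t3.eventually_ge_atTop Q₀).and (eventually_ge_atTop 1)))
  obtain ⟨Q₁, hQ₁⟩ := eventually_atTop.1 hev
  obtain ⟨Q, hQQ₁, r, hrS, hrden, hrapp⟩ := hl Q₁
  obtain ⟨h1, h2, h3, h4⟩ := hQ₁ Q hQQ₁
  have hQpos : (0:ℝ) < Q := lt_of_lt_of_le one_pos h4
  obtain ⟨r', hr'S, hr'den, hr'app⟩ := hQ₀ (Q ^ c) h3
  have hne : ((r : ℝ)) ≠ (r' : ℝ) := fun h => hr'S (h ▸ hrS)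
  set b : ℝ := (r.den : ℝ) with hbdef
  set b' : ℝ := (r'.den : ℝ) with hb'def
  have hb : (0:ℝ) < b := by positivity
  have hb' : (0:ℝ) < b' := by positivity
  have key0 : ((r : ℝ) - (r' : ℝ)) * (b * b')
      = ((r.num * (r'.den : ℤ) - r'.num * (r.den : ℤ) : ℤ) : ℝ) := by
    rw [Rat.cast_def, Rat.cast_def, hbdef, hb'def]
    push_cast
    field_simp
  have hn : (r.num * (r'.den : ℤ) - r'.num * (r.den : ℤ) : ℤ) ≠ 0 := by
    intro h
    apply hne
    have h2' := key0
    rw [h] at h2'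
    simp only [Int.cast_zero] at h2'
    rcases mul_eq_zero.1 h2' with h' | h'
    · linarith [sub_eq_zero.1 h']
    · nlinarith
  have hlow : (1:ℝ) ≤ |(r : ℝ) - (r' : ℝ)| * (b * b') := by
    have h1abs : (1:ℝ) ≤ |((r.num * (r'.den : ℤ) - r'.num * (r.den : ℤ) : ℤ) : ℝ)| := by
      rw [← Int.cast_abs]
      exact_mod_cast Int.one_le_abs hn
    calc (1:ℝ) ≤ |((r.num * (r'.den : ℤ) - r'.num * (r.den : ℤ) : ℤ) : ℝ)| := h1abs
      _ = |((r : ℝ) - (r' : ℝ)) * (b * b')| := by rw [key0]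
      _ = |(r : ℝ) - (r' : ℝ)| * (b * b') := by
          rw [abs_mul, abs_of_pos (by positivity : (0:ℝ) < b * b')]
  have hr'app2 : |ξ - (r' : ℝ)| ≤ b'⁻¹ * Q ^ (-(c * μ)) := by
    have e : (Q ^ c) ^ (-μ) = Q ^ (-(c * μ)) := by
      rw [← Real.rpow_mul hQpos.le]
      congr 1
      ring
    rwa [e] at hr'app
  have hXnn : (0:ℝ) ≤ Q ^ (-l) := Real.rpow_nonneg hQpos.le _
  have hYnn : (0:ℝ) ≤ Q ^ (-(c * μ)) := Real.rpow_nonneg hQpos.le _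
  have hup : |(r : ℝ) - (r' : ℝ)| ≤ b⁻¹ * Q ^ (-l) + b'⁻¹ * Q ^ (-(c * μ)) := by
    calc |(r : ℝ) - (r' : ℝ)| ≤ |(r : ℝ) - ξ| + |ξ - (r' : ℝ)| := abs_sub_le _ _ _
      _ = |ξ - (r : ℝ)| + |ξ - (r' : ℝ)| := by rw [abs_sub_comm]
      _ ≤ b⁻¹ * Q ^ (-l) + b'⁻¹ * Q ^ (-(c * μ)) := add_le_add hrapp hr'app2
  have expand : (b⁻¹ * Q ^ (-l) + b'⁻¹ * Q ^ (-(c * μ))) * (b * b')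
      = b' * Q ^ (-l) + b * Q ^ (-(c * μ)) := by
    field_simp
  have e1 : Q ^ c * Q ^ (-l) = Q ^ (c - l) := by
    rw [sub_eq_add_neg, Real.rpow_add hQpos]
  have e2 : Q * Q ^ (-(c * μ)) = Q ^ (1 - c * μ) := by
    rw [sub_eq_add_neg, Real.rpow_add hQpos, Real.rpow_one]
  have hfinal : (1:ℝ) ≤ Q ^ (c - l) + Q ^ (1 - c * μ) := by
    calc (1:ℝ) ≤ |(r : ℝ) - (r' : ℝ)| * (b * b') := hlow
      _ ≤ (b⁻¹ * Q ^ (-l) + b'⁻¹ * Q ^ (-(c * μ))) * (b * b') := by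
          apply mul_le_mul_of_nonneg_right hup (by positivity)
      _ = b' * Q ^ (-l) + b * Q ^ (-(c * μ)) := expand
      _ ≤ Q ^ c * Q ^ (-l) + Q * Q ^ (-(c * μ)) :=
          add_le_add (mul_le_mul_of_nonneg_right hr'den hXnn)
            (mul_le_mul_of_nonneg_right hrden hYnn)
      _ = Q ^ (c - l) + Q ^ (1 - c * μ) := by rw [e1, e2]
  linarith

/-- `λ̂_ext(ξ) ≤ 1 / λ_int(ξ)`, with the convention `1/0 = ∞`. -/
theorem stmt_17 (S : Set ℝ) (ξ : ℝ) (hξS : ξ ∈ S) (hirr : Irrational ξ) :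
    unifExp {r : ℚ | (r : ℝ) ∉ S} ξ ≤
      (if ordExp {r : ℚ | (r : ℝ) ∈ S} ξ = 0 then (⊤ : EReal)
        else (ordExp {r : ℚ | (r : ℝ) ∈ S} ξ)⁻¹) := by
  set E := ordExp {r : ℚ | (r : ℝ) ∈ S} ξ with hE
  by_cases hE0 : E = 0
  · rw [if_pos hE0]; exact le_top
  rw [if_neg hE0]
  have hEnn : (0 : EReal) ≤ E := le_sSup (Set.mem_insert _ _)
  apply sSup_le
  rintro x (rfl | ⟨μ, hμU, rfl⟩)
  · exact EReal.inv_nonneg_of_nonneg hEnn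
  by_cases hμ0 : μ ≤ 0
  · exact le_trans (by exact_mod_cast hμ0) (EReal.inv_nonneg_of_nonneg hEnn)
  push_neg at hμ0
  -- show E ≤ μ⁻¹
  have hEle : E ≤ ((μ⁻¹ : ℝ) : EReal) := by
    apply sSup_le
    rintro y (rfl | ⟨l, hlA, rfl⟩)
    · exact_mod_cast (inv_pos.2 hμ0).le
    · rw [EReal.coe_le_coe_iff]
      by_cases hl0 : l ≤ 0
      · exact le_trans hl0 (inv_pos.2 hμ0).le
      push_neg at hl0
      have hkey := key_mul_le_one hl0 hμ0 hlA hμU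
      rw [← one_div, le_div_iff₀ hμ0]
      linarith [mul_comm μ l]
  have hEtop : E ≠ ⊤ := fun h => by simp [h] at hEle
  have hEbot : E ≠ ⊥ := fun h => by simp [h] at hEnn
  obtain ⟨e, he⟩ : ∃ e : ℝ, E = (e : EReal) := ⟨E.toReal, (EReal.coe_toReal hEtop hEbot).symm⟩
  rw [he] at hEle hEnn hE0 ⊢
  have hepos : 0 < e := lt_of_le_of_ne (by exact_mod_cast hEnn) (by
    intro h; exact hE0 (by exact_mod_cast h.symm))
  have hele : e ≤ μ⁻¹ := by exact_mod_cast hEle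
  rw [← EReal.coe_inv, EReal.coe_le_coe_iff]
  rw [← one_div, le_div_iff₀ hepos]
  have := mul_le_mul_of_nonneg_left hele hμ0.le
  rw [mul_inv_cancel₀ hμ0.ne'] at this
  linarith
end

section
/- Let b ≥ 3, W ⊊ {0,…,b−1} with |W| ≥ 2, Δ = log|W|/log b. Let ξ ∈ (0,1) be rational with eventually periodic base-b expansion ξ = (0.c_0 c_1 ⋯ c_k \overline{c_{k+1} ⋯ c_{N−1}})_b, and suppose not all digits c_i lie in W; let φ(ξ) ∈ {0,…,N−1} be the smallest index i with c_i ∉ W. If q_0 is the reduced denominator of ξ, then φ(ξ) ≪ q_0^Δ (implied constant depending only on b and W). Equivalently, if the first s digits of ξ all lie in W but some later digit does not, then q_0 ≫ s^{1/Δ}. -/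
/-!
Write `x j` for the value of the digit tail `0.c_j c_{j+1} …`. Since `x j = b^j ξ - n_j` with
`n_j ∈ ℤ`, all `x j` lie in `(1/q₀)ℤ ∩ [0, 1]`. For `j ≤ m` they are pairwise distinct: `x j = x j'`
forces the digits to repeat with period `j' - j` from `j` on, and then every digit lies in `W`.
Choose `t` with `b^(t-1) ≤ q₀ < b^t`. Tails with the same first `t` digits are within
`b^(-t) < 1/q₀` of each other, hence equal, so `j ↦ (c_j, …, c_{j+t-1}) ∈ W^t` is injective
on `j ≤ m - t`.
Thus `m < t + |W|^t ≪ |W|^(t-1) = (b^(t-1))^Δ ≤ q₀^Δ`.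
-/

theorem forall_of_shift_eq_of_forall_lt {α : Type*} {a : ℕ → α} {P : α → Prop} {j j' : ℕ}
    (hjj' : j < j') (hshift : ∀ i, a (i + j) = a (i + j')) (hP : ∀ i < j', P (a i)) (i : ℕ) :
    P (a i) := by
  rcases lt_or_ge i j with hij | hji
  · exact hP i (hij.trans hjj')
  have hper : Function.Periodic (fun i => a (i + j)) (j' - j) := fun i => by
    simp only [hshift, add_assoc, Nat.sub_add_cancel hjj'.le]
  have hrep := hper.map_mod_nat (i - j)
  simp only [Nat.sub_add_cancel hji] at hrep
  rw [← hrep]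
  exact hP _ (by have := Nat.mod_lt (i - j) (Nat.sub_pos_of_lt hjj'); omega)

theorem Int.eq_of_abs_div_sub_div_lt {q : ℝ} (hq : 0 < q) {n n' : ℤ}
    (h : |n / q - n' / q| < q⁻¹) : n = n' := by
  rw [← sub_div, abs_div, abs_of_pos hq, div_lt_iff₀ hq, inv_mul_cancel₀ hq.ne'] at h
  exact sub_eq_zero.mp (Int.abs_lt_one_iff.mp (by exact_mod_cast h))

namespace Real

variable {b : ℕ}

theorem ofDigits_eq_zero_iff {a : ℕ → Fin b} : ofDigits a = 0 ↔ ∀ i, (a i : ℕ) = 0 := by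
  have hb : (0 : ℝ) < b := by exact_mod_cast Fin.pos (a 0)
  rw [ofDigits, ← summable_ofDigitsTerm.hasSum_iff,
    hasSum_zero_iff_of_nonneg fun _ => ofDigitsTerm_nonneg, funext_iff]
  simp [ofDigitsTerm, hb.ne']

theorem ofDigits_add_ofDigits_rev (hb : 1 < b) (a : ℕ → Fin b) :
    ofDigits a + ofDigits (fun i => (a i).rev) = 1 := by
  rw [← ofDigits_const_last_eq_one' hb, ofDigits, ofDigits, ofDigits,
    ← summable_ofDigitsTerm.tsum_add summable_ofDigitsTerm]
  refine tsum_congr fun i => ?_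
  have hrev : (a i : ℕ) + (a i).rev = b - 1 := by rw [Fin.val_rev]; omega
  simp only [ofDigitsTerm, ← add_mul]
  exact_mod_cast congrArg (· * ((b : ℝ) ^ (i + 1))⁻¹) (congrArg Nat.cast hrev)

theorem val_eq_of_ofDigits_eq_one (hb : 1 < b) {a : ℕ → Fin b} (h : ofDigits a = 1) (i : ℕ) :
    (a i : ℕ) = b - 1 := by
  have hrev := (ofDigits_eq_zero_iff (a := fun i => (a i).rev)).mp
    (by linarith [ofDigits_add_ofDigits_rev hb a]) i
  rw [Fin.val_rev] at hrev
  omega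

theorem ofDigits_shift_eq (a : ℕ → Fin b) (j : ℕ) :
    ofDigits (fun i => a (i + j)) = ((a j : ℝ) + ofDigits (fun i => a (i + (j + 1)))) / b := by
  rw [ofDigits_eq_sum_add_ofDigits _ 1]
  simp only [Finset.range_one, ofDigitsTerm, Finset.sum_singleton, zero_add, pow_one,
    add_right_comm _ 1 j, add_assoc]
  ring

theorem ofDigits_shift_succ_eq_one_of_lt {a : ℕ → Fin b} {j j' : ℕ}
    (h : ofDigits (fun i => a (i + j)) = ofDigits (fun i => a (i + j'))) (hlt : a j < a j') :
    ofDigits (fun i => a (i + (j + 1))) = 1 ∧ ofDigits (fun i => a (i + (j' + 1))) = 0 := by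
  have hb : (0 : ℝ) < b := by exact_mod_cast Fin.pos (a 0)
  rw [ofDigits_shift_eq a j, ofDigits_shift_eq a j', div_left_inj' hb.ne'] at h
  have hlt' : (a j : ℝ) + 1 ≤ a j' := by exact_mod_cast hlt
  have := ofDigits_le_one fun i => a (i + (j + 1))
  have := ofDigits_nonneg fun i => a (i + (j' + 1))
  constructor <;> linarith

/-- The ambiguity `…d(b-1)(b-1)… = …(d+1)00…` of base-`b` expansions cannot occur between two
shifts of one sequence: it would force the sequence to end both in `b - 1` and in `0`. -/
theorem shift_eq_of_ofDigits_shift_eq (hb : 2 ≤ b) {a : ℕ → Fin b} {j j' : ℕ}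
    (h : ofDigits (fun i => a (i + j)) = ofDigits (fun i => a (i + j'))) (i : ℕ) :
    a (i + j) = a (i + j') := by
  have head_not_lt : ∀ {j j'}, ofDigits (fun i => a (i + j)) = ofDigits (fun i => a (i + j')) →
      ¬ a j < a j' := fun {j j'} h hlt => by
    obtain ⟨hone, hzero⟩ := ofDigits_shift_succ_eq_one_of_lt h hlt
    have hlast := val_eq_of_ofDigits_eq_one (by omega) hone (j' + 1)
    have hfirst := ofDigits_eq_zero_iff.mp hzero (j + 1)
    rw [add_comm (j' + 1)] at hlast
    omega
  have step : ∀ {j j'}, ofDigits (fun i => a (i + j)) = ofDigits (fun i => a (i + j')) →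
      a j = a j' ∧ ofDigits (fun i => a (i + (j + 1))) = ofDigits (fun i => a (i + (j' + 1))) :=
    fun {j j'} h => by
      have hhead : a j = a j' := le_antisymm (not_lt.mp (head_not_lt h.symm))
        (not_lt.mp (head_not_lt h))
      refine ⟨hhead, ?_⟩
      rw [ofDigits_shift_eq a j, ofDigits_shift_eq a j', hhead] at h
      have hb0 : (b : ℝ) ≠ 0 := by positivity
      simpa [hb0] using h
  induction i generalizing j j' with
  | zero => simpa using (step h).1
  | succ i ih => simpa [add_right_comm _ 1, add_assoc] using ih (step h).2

theorem exists_int_ofDigits_shift_eq (a : ℕ → Fin b) (j : ℕ) :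
    ∃ n : ℤ, ofDigits (fun i => a (i + j)) = b ^ j * ofDigits a - n := by
  induction j with
  | zero => exact ⟨0, by simp⟩
  | succ j ih =>
    obtain ⟨n, hn⟩ := ih
    have hb : (b : ℝ) ≠ 0 := by exact_mod_cast (Fin.pos (a 0)).ne'
    refine ⟨b * n + a j, ?_⟩
    have hshift := ofDigits_shift_eq a j
    rw [hn, eq_div_iff hb] at hshift
    push_cast
    linear_combination -hshift

theorem ofDigits_shift_injOn (hb : 2 ≤ b) {a : ℕ → Fin b} {W : Finset ℕ} {m : ℕ}
    (hW : ∀ i < m, (a i : ℕ) ∈ W) (hm : (a m : ℕ) ∉ W) :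
    Set.InjOn (fun j => ofDigits (fun i => a (i + j))) (Set.Iic m) := by
  intro j hj j' hj' h
  by_contra hne
  wlog hlt : j < j' generalizing j j'
  · exact this hj' hj h.symm (Ne.symm hne) (by omega)
  exact hm (forall_of_shift_eq_of_forall_lt (P := fun d : Fin b => (d : ℕ) ∈ W) hlt
    (shift_eq_of_ofDigits_shift_eq hb h) (fun i hi => hW i (hi.trans_le hj')) m)

theorem lt_add_card_pow_of_ofDigits_eq_div (hb : 2 ≤ b) {a : ℕ → Fin b} {n : ℤ} {q : ℕ}
    (hq : 0 < q) (ha : ofDigits a = n / q) {W : Finset ℕ} {m t : ℕ} (hqt : q < b ^ t)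
    (hW : ∀ i < m, (a i : ℕ) ∈ W) (hm : (a m : ℕ) ∉ W) :
    m < t + W.card ^ t := by
  have hqR : (0 : ℝ) < q := by exact_mod_cast hq
  have hshift_div : ∀ j, ∃ n : ℤ, ofDigits (fun i => a (i + j)) = n / q := fun j => by
    obtain ⟨n', hn'⟩ := exists_int_ofDigits_shift_eq a j
    exact ⟨b ^ j * n - n' * q, by rw [hn', ha]; push_cast; field_simp⟩
  have hword : Set.InjOn (fun j (u : Fin t) => (a (u + j) : ℕ)) (Finset.range (m + 1 - t)) := by
    intro j hj j' hj' hjj'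
    simp only [Finset.coe_range, Set.mem_Iio] at hj hj'
    refine ofDigits_shift_injOn hb hW hm (Set.mem_Iic.mpr (by omega))
      (Set.mem_Iic.mpr (by omega)) ?_
    obtain ⟨n, hn⟩ := hshift_div j
    obtain ⟨n', hn'⟩ := hshift_div j'
    have hclose := abs_ofDigits_sub_ofDigits_le (n := t) (x := fun i => a (i + j))
      (y := fun i => a (i + j')) fun i hi => Fin.ext (congrFun hjj' ⟨i, hi⟩)
    have hbq : ((b : ℝ) ^ t)⁻¹ < (q : ℝ)⁻¹ := inv_strictAnti₀ hqR (by exact_mod_cast hqt)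
    rw [hn, hn'] at hclose
    simp only [hn, hn', Int.eq_of_abs_div_sub_div_lt hqR (hclose.trans_lt hbq)]
  have hmaps : Set.MapsTo (fun j (u : Fin t) => (a (u + j) : ℕ)) (Finset.range (m + 1 - t))
      (Fintype.piFinset fun _ : Fin t => W : Finset (Fin t → ℕ)) := fun j hj => by
    rw [Finset.coe_range, Set.mem_Iio] at hj
    rw [Finset.mem_coe, Fintype.mem_piFinset]
    exact fun u => hW _ (by have := u.isLt; omega)
  have hcard := Finset.card_le_card_of_injOn _ hmaps hword
  simp only [Finset.card_range, Fintype.card_piFinset, Finset.prod_const, Finset.card_univ,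
    Fintype.card_fin] at hcard
  omega

theorem natCast_pow_le_rpow_logb {w q L : ℕ} (hb : 1 < b) (hw : 1 ≤ w) (hq : b ^ L ≤ q) :
    (w : ℝ) ^ L ≤ (q : ℝ) ^ logb b w := by
  have hbR : (1 : ℝ) < b := by exact_mod_cast hb
  calc (w : ℝ) ^ L = ((b : ℝ) ^ logb b w) ^ L := by
        rw [rpow_logb (by positivity) hbR.ne' (by positivity)]
    _ = ((b : ℝ) ^ L) ^ logb b w := by
        rw [← rpow_mul_natCast (by positivity), mul_comm, rpow_natCast_mul (by positivity)]
    _ ≤ (q : ℝ) ^ logb b w :=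
        rpow_le_rpow (by positivity) (by exact_mod_cast hq)
          (logb_nonneg hbR (by exact_mod_cast hw))

end Real

theorem stmt_18_general (b : ℕ) (hb : 3 ≤ b) (W : Finset ℕ)
    (hW2 : 2 ≤ W.card)
    (Δ : ℝ) (hΔ : Δ = Real.log W.card / Real.log b) :
    ∃ K : ℝ, 0 < K ∧ ∀ (ξ : ℚ) (c : ℕ → ℕ) (k N : ℕ) (m : ℕ),
      0 < ξ → ξ < 1 → (∀ j, c j < b) → k + 1 < N →
      (ξ : ℝ) = ∑' j : ℕ, (c j : ℝ) / (b : ℝ) ^ (j + 1) →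
      (∀ j, k + 1 ≤ j → c (j + (N - 1 - k)) = c j) →
      IsLeast {i : ℕ | c i ∉ W} m →
      (m : ℝ) ≤ K * (ξ.den : ℝ) ^ Δ := by
  refine ⟨W.card + 1, by positivity, fun ξ c k N m _ _ hc _ hξ _ hleast => ?_⟩
  set L := Nat.log b ξ.den
  have hden : Real.ofDigits (fun j => (⟨c j, hc j⟩ : Fin b)) = ξ.num / ξ.den := by
    rw [← Rat.cast_def, hξ]
    simp [Real.ofDigits, Real.ofDigitsTerm, div_eq_mul_inv]
  have hm : m < (L + 1) + W.card ^ (L + 1) :=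
    Real.lt_add_card_pow_of_ofDigits_eq_div (by omega) ξ.pos hden
      (Nat.lt_pow_succ_log_self (by omega) _)
      (fun i hi => by_contra fun h => (hleast.2 h).not_gt hi) hleast.1
  have hL : L < W.card ^ L := Nat.lt_two_pow_self.trans_le (Nat.pow_le_pow_left hW2 L)
  have hmL : m ≤ (W.card + 1) * W.card ^ L := by
    rw [pow_succ] at hm
    nlinarith
  calc (m : ℝ) ≤ (W.card + 1) * (W.card : ℝ) ^ L := by exact_mod_cast hmL
    _ ≤ (W.card + 1) * (ξ.den : ℝ) ^ Δ := by
        rw [hΔ, Real.log_div_log]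
        gcongr
        exact Real.natCast_pow_le_rpow_logb (by omega) (by omega) (Nat.pow_log_le_self b ξ.den_nz)

/-- if the rational `ξ ∈ (0,1)` has eventually periodic base-`b` digits
`c 0, c 1, …` (preperiod `c 0 … c k`, period `c (k+1) … c (N-1)`), not all digits lie
in `W`, and `m` is the smallest index with `c m ∉ W`, then `m ≪_{b,W} q₀^Δ` for `q₀`
the reduced denominator of `ξ`. -/
theorem stmt_18 (b : ℕ) (hb : 3 ≤ b) (W : Finset ℕ)
    (hWsub : W ⊆ Finset.range b) (hW2 : 2 ≤ W.card) (hWne : W ≠ Finset.range b)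
    (Δ : ℝ) (hΔ : Δ = Real.log W.card / Real.log b) :
    ∃ K : ℝ, 0 < K ∧ ∀ (ξ : ℚ) (c : ℕ → ℕ) (k N : ℕ) (m : ℕ),
      0 < ξ → ξ < 1 → (∀ j, c j < b) → k + 1 < N →
      (ξ : ℝ) = ∑' j : ℕ, (c j : ℝ) / (b : ℝ) ^ (j + 1) →
      (∀ j, k + 1 ≤ j → c (j + (N - 1 - k)) = c j) →
      IsLeast {i : ℕ | c i ∉ W} m →
      (m : ℝ) ≤ K * (ξ.den : ℝ) ^ Δ :=
  stmt_18_general b hb W hW2 Δ hΔ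
end
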